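/- arXiv:2502.15884 — 7 statements merged into one kernel-verified Lean document; each statement's English description precedes it below -/
import Mathlib

section
/- Let H be a finite bipartite graph with parts L and R, let F^(j) be its forget iteration, and let F_H = F^(|L|) be its stabilized value. For any X ⊆ F_H, define the modified iteration by F_X^(0) = X and, for j ≥ 0, I_X^(j) = N_H(F_X^(j)), Q_X^(j) = R \ I_X^(j), and F_X^(j+1) = { v ∈ L : |N_H(v) ∩ Q_X^(j)| = 0, or (|N_H(v) ∩ Q_X^(j)| = 1 and deg_H(v) ≤ 2) }. Then F^(j) ⊆ F_X^(j) ⊆ F_H for every j ≥ 0, and consequently F_X^(j) = F_H for every j ≥ |L|; in other words, the stabilized set of the iteration does not depend on the starting set X ⊆ F_H. -/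
/-- For any starting set `X ⊆ F_H`, the modified forget iteration
satisfies `F⁽ʲ⁾ ⊆ F_X⁽ʲ⁾ ⊆ F_H` for all `j`, and hence stabilizes to the same
set `F_H = F⁽|L|⁾` for all `j ≥ |L|`. -/
theorem forget_iteration_start_irrelevant {V : Type*} [Fintype V] [DecidableEq V]
    (H : SimpleGraph V) [DecidableRel H.Adj]
    (L R : Finset V) (hdisj : Disjoint L R) (hunion : L ∪ R = Finset.univ)
    (hbip : ∀ u v, H.Adj u v → (u ∈ L ∧ v ∈ R) ∨ (u ∈ R ∧ v ∈ L))
    (F : ℕ → Finset V) (hF0 : F 0 = ∅)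
    (hFstep : ∀ j v, v ∈ F (j + 1) ↔ v ∈ L ∧
      ((H.neighborFinset v ∩ (R \ (F j).biUnion (fun u => H.neighborFinset u))).card = 0 ∨
       ((H.neighborFinset v ∩ (R \ (F j).biUnion (fun u => H.neighborFinset u))).card = 1 ∧
        H.degree v ≤ 2)))
    (X : Finset V) (hX : X ⊆ F L.card)
    (FX : ℕ → Finset V) (hFX0 : FX 0 = X)
    (hFXstep : ∀ j v, v ∈ FX (j + 1) ↔ v ∈ L ∧
      ((H.neighborFinset v ∩ (R \ (FX j).biUnion (fun u => H.neighborFinset u))).card = 0 ∨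
       ((H.neighborFinset v ∩ (R \ (FX j).biUnion (fun u => H.neighborFinset u))).card = 1 ∧
        H.degree v ≤ 2))) :
    (∀ j, F j ⊆ FX j ∧ FX j ⊆ F L.card) ∧
    (∀ j, L.card ≤ j → FX j = F L.card) := by
  classical
  -- monotonicity of the step condition
  have key : ∀ (A B : Finset V), A ⊆ B → ∀ v : V,
      ((H.neighborFinset v ∩ (R \ A.biUnion (fun u => H.neighborFinset u))).card = 0 ∨
       ((H.neighborFinset v ∩ (R \ A.biUnion (fun u => H.neighborFinset u))).card = 1 ∧
        H.degree v ≤ 2)) →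
      ((H.neighborFinset v ∩ (R \ B.biUnion (fun u => H.neighborFinset u))).card = 0 ∨
       ((H.neighborFinset v ∩ (R \ B.biUnion (fun u => H.neighborFinset u))).card = 1 ∧
        H.degree v ≤ 2)) := by
    intro A B hAB v h
    have hsub : (H.neighborFinset v ∩ (R \ B.biUnion (fun u => H.neighborFinset u))) ⊆
        (H.neighborFinset v ∩ (R \ A.biUnion (fun u => H.neighborFinset u))) := by
      exact Finset.inter_subset_inter (Finset.Subset.refl _)
        (Finset.sdiff_subset_sdiff (le_refl R)
          (Finset.biUnion_subset_biUnion_of_subset_left _ hAB))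
    have hle := Finset.card_le_card hsub
    rcases h with h | ⟨h1, h2⟩
    · left; omega
    · rcases Nat.lt_or_ge
        (H.neighborFinset v ∩ (R \ B.biUnion (fun u => H.neighborFinset u))).card 1 with h' | h'
      · left; omega
      · right; exact ⟨by omega, h2⟩
  have hFmono : ∀ j, F j ⊆ F (j + 1) := by
    intro j
    induction j with
    | zero => rw [hF0]; exact Finset.empty_subset _
    | succ j ih =>
      intro v hv
      rw [hFstep] at hv ⊢
      exact ⟨hv.1, key _ _ ih v hv.2⟩
  have hFsubL : ∀ j, F (j + 1) ⊆ L := fun j v hv => ((hFstep j v).mp hv).1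
  -- if F stabilizes at step j it stays constant
  have hconst : ∀ j, F j = F (j + 1) → ∀ k, j ≤ k → F k = F j := by
    intro j hj k hk
    induction k, hk using Nat.le_induction with
    | base => rfl
    | succ k hk ih =>
      have h1 : F (k + 1) = F (j + 1) := by
        ext v; rw [hFstep, hFstep, ih]
      rw [h1, ← hj]
  have hfix : F (L.card + 1) = F L.card := by
    by_contra hne
    have hne' : ∀ j ≤ L.card, F j ≠ F (j + 1) := by
      intro j hj heq
      apply hne
      rw [hconst j heq L.card hj, hconst j heq (L.card + 1) (by omega)]
    have hgrow : ∀ j ≤ L.card + 1, j ≤ (F j).card := by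
      intro j hj
      induction j with
      | zero => omega
      | succ j ih =>
        have h1 : j ≤ (F j).card := ih (by omega)
        have h2 : F j ⊂ F (j + 1) :=
          Finset.ssubset_iff_subset_ne.2 ⟨hFmono j, hne' j (by omega)⟩
        have := Finset.card_lt_card h2
        omega
    have h1 := hgrow (L.card + 1) (le_refl _)
    have h2 := Finset.card_le_card (hFsubL L.card)
    omega
  have hFtop : ∀ j, L.card ≤ j → F j = F L.card :=
    hconst L.card hfix.symm
  have main : ∀ j, F j ⊆ FX j ∧ FX j ⊆ F L.card := by
    intro j
    induction j with
    | zero =>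
      constructor
      · rw [hF0]; exact Finset.empty_subset _
      · rw [hFX0]; exact hX
    | succ j ih =>
      constructor
      · intro v hv
        rw [hFstep] at hv
        rw [hFXstep]
        exact ⟨hv.1, key _ _ ih.1 v hv.2⟩
      · intro v hv
        rw [hFXstep] at hv
        have : v ∈ F (L.card + 1) := (hFstep L.card v).mpr ⟨hv.1, key _ _ ih.2 v hv.2⟩
        rwa [hfix] at this
  refine ⟨main, fun j hj => ?_⟩
  apply Finset.Subset.antisymm (main j).2
  rw [← hFtop j hj]
  exact (main j).1
end

section
/- Let H be a finite bipartite graph with parts L and R, and let F^(j) be its forget iteration with I^(j) = N_H(F^(j)). Then |I^(j)| ≤ |F^(j)| for every j ≥ 0; in particular, for the stabilized sets F_H = F^(|L|) and I_H = N_H(F_H), it holds that |I_H| ≤ |F_H|. -/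
/-- In the forget iteration of a finite bipartite graph,
`|I⁽ʲ⁾| ≤ |F⁽ʲ⁾|` for every `j`; in particular `|I_H| ≤ |F_H|` for the
stabilized sets `F_H = F⁽|L|⁾` and `I_H = N_H(F_H)`. -/
theorem forget_iteration_intro_le_forget {V : Type*} [Fintype V] [DecidableEq V]
    (H : SimpleGraph V) [DecidableRel H.Adj]
    (L R : Finset V) (hdisj : Disjoint L R) (hunion : L ∪ R = Finset.univ)
    (hbip : ∀ u v, H.Adj u v → (u ∈ L ∧ v ∈ R) ∨ (u ∈ R ∧ v ∈ L))
    (F : ℕ → Finset V) (hF0 : F 0 = ∅)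
    (hFstep : ∀ j v, v ∈ F (j + 1) ↔ v ∈ L ∧
      ((H.neighborFinset v ∩ (R \ (F j).biUnion (fun u => H.neighborFinset u))).card = 0 ∨
       ((H.neighborFinset v ∩ (R \ (F j).biUnion (fun u => H.neighborFinset u))).card = 1 ∧
        H.degree v ≤ 2))) :
    (∀ j, ((F j).biUnion (fun u => H.neighborFinset u)).card ≤ (F j).card) ∧
    ((F L.card).biUnion (fun u => H.neighborFinset u)).card ≤ (F L.card).card := by
  classical
  set I : ℕ → Finset V := fun j => (F j).biUnion (fun u => H.neighborFinset u) with hIdef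
  -- F j ⊆ L
  have hFL : ∀ j, F j ⊆ L := by
    intro j
    cases j with
    | zero => simp [hF0]
    | succ n => intro v hv; exact ((hFstep n v).mp hv).1
  -- I j ⊆ R
  have hIR : ∀ j, I j ⊆ R := by
    intro j w hw
    obtain ⟨v, hv, hwv⟩ := Finset.mem_biUnion.mp hw
    have hadj : H.Adj v w := (SimpleGraph.mem_neighborFinset H v w).mp hwv
    rcases hbip v w hadj with ⟨_, hwR⟩ | ⟨hvR, _⟩
    · exact hwR
    · exact absurd hvR (Finset.disjoint_left.mp hdisj (hFL j hv))
  -- Monotonicity of F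
  have hmono : ∀ j, F j ⊆ F (j + 1) := by
    intro j
    induction j with
    | zero => simp [hF0]
    | succ n ih =>
      intro v hv
      rw [hFstep] at hv ⊢
      refine ⟨hv.1, ?_⟩
      have hIsub : I n ⊆ I (n + 1) :=
        Finset.biUnion_subset_biUnion_of_subset_left _ ih
      have hsub : H.neighborFinset v ∩ (R \ I (n + 1)) ⊆
          H.neighborFinset v ∩ (R \ I n) :=
        Finset.inter_subset_inter (Finset.Subset.refl _)
          (Finset.sdiff_subset_sdiff (le_refl R) hIsub)
      have hcard := Finset.card_le_card hsub
      rcases hv.2 with h0 | ⟨h1, hd⟩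
      · left
        have h0' : (H.neighborFinset v ∩ (R \ I n)).card = 0 := h0
        show (H.neighborFinset v ∩ (R \ I (n + 1))).card = 0
        omega
      · have h1' : (H.neighborFinset v ∩ (R \ I n)).card = 1 := h1
        rcases Nat.eq_zero_or_pos (H.neighborFinset v ∩ (R \ I (n + 1))).card with h | h
        · left; exact h
        · right
          refine ⟨?_, hd⟩
          show (H.neighborFinset v ∩ (R \ I (n + 1))).card = 1
          omega
  -- the key card bound
  have key : ∀ j, (I j).card ≤ (F j).card := by
    intro j
    induction j with
    | zero => simp [hIdef, hF0]
    | succ n ih =>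
      have hIsub : I n ⊆ I (n + 1) :=
        Finset.biUnion_subset_biUnion_of_subset_left _ (hmono n)
      -- choice function for new vertices
      have hex : ∀ w ∈ I (n + 1) \ I n,
          ∃ v, v ∈ F (n + 1) \ F n ∧ w ∈ H.neighborFinset v := by
        intro w hw
        obtain ⟨hw1, hw2⟩ := Finset.mem_sdiff.mp hw
        obtain ⟨v, hv, hwv⟩ := Finset.mem_biUnion.mp hw1
        refine ⟨v, Finset.mem_sdiff.mpr ⟨hv, fun hvn => hw2 ?_⟩, hwv⟩
        exact Finset.mem_biUnion.mpr ⟨v, hvn, hwv⟩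
      choose! f hf1 hf2 using hex
      have hnew : (I (n + 1) \ I n).card ≤ (F (n + 1) \ F n).card := by
        apply Finset.card_le_card_of_injOn f hf1
        intro w1 hw1 w2 hw2 heq
        have hw1' : w1 ∈ I (n + 1) \ I n := hw1
        have hw2' : w2 ∈ I (n + 1) \ I n := hw2
        have hv1 := hf1 w1 hw1'
        have hn1 := hf2 w1 hw1'
        have hn2 : w2 ∈ H.neighborFinset (f w1) := by rw [heq]; exact hf2 w2 hw2'
        have hvF : f w1 ∈ F (n + 1) := (Finset.mem_sdiff.mp hv1).1
        have hw1m : w1 ∈ H.neighborFinset (f w1) ∩ (R \ I n) := by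
          refine Finset.mem_inter.mpr ⟨hn1, Finset.mem_sdiff.mpr
            ⟨hIR (n + 1) (Finset.mem_sdiff.mp hw1').1, (Finset.mem_sdiff.mp hw1').2⟩⟩
        have hw2m : w2 ∈ H.neighborFinset (f w1) ∩ (R \ I n) := by
          refine Finset.mem_inter.mpr ⟨hn2, Finset.mem_sdiff.mpr
            ⟨hIR (n + 1) (Finset.mem_sdiff.mp hw2').1, (Finset.mem_sdiff.mp hw2').2⟩⟩
        have hle1 : (H.neighborFinset (f w1) ∩ (R \ I n)).card ≤ 1 := by
          rcases ((hFstep n (f w1)).mp hvF).2 with h0 | ⟨h1, _⟩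
          · have h0' : (H.neighborFinset (f w1) ∩ (R \ I n)).card = 0 := h0
            omega
          · have h1' : (H.neighborFinset (f w1) ∩ (R \ I n)).card = 1 := h1
            omega
        exact Finset.card_le_one.mp hle1 w1 hw1m w2 hw2m
      have hFsub := hmono n
      have e1 : (I (n + 1) \ I n).card + (I n).card = (I (n + 1)).card :=
        Finset.card_sdiff_add_card_eq_card hIsub
      have e2 : (F (n + 1) \ F n).card + (F n).card = (F (n + 1)).card :=
        Finset.card_sdiff_add_card_eq_card hFsub
      omega
  exact ⟨key, key L.card⟩
end

section
/- Let G be a finite simple graph whose vertex set is enumerated as v₁, …, vₙ, and suppose |E_m| ≤ k for every 0 ≤ m ≤ n, where E_m is the set of edges {v_a, v_b} with a ≤ m < b. Let j ∈ {1, …, n}, let Y_j = { v_a : a < j and v_a has a neighbor v_b with b ≥ j } ∪ {v_j}, and let H_j be the spanning subgraph of G whose edges are exactly the edges {v_a, v_b} of G with a < b and b ≥ j. Then |{ u ∈ Y_j : deg_{H_j}(u) = 1 }| + 2·|{ u ∈ Y_j : deg_{H_j}(u) ≥ 2 }| ≤ k + 2. -/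
/-- For a linear arrangement of cutwidth at most `k`
(realized as `G : SimpleGraph (Fin n)`, `v_a` the vertex of index `a − 1`, the cut
`E_m` being the edges with 0-indexed endpoints `a < m ≤ b`), `j : Fin n`,
`Y_j = {a < j : a has a neighbor b ≥ j} ∪ {j}`, and `H_j` the spanning subgraph
whose edges are the edges `{a, b}` with `max a b ≥ j`:
`|{u ∈ Y_j : deg_{H_j}(u) = 1}| + 2·|{u ∈ Y_j : deg_{H_j}(u) ≥ 2}| ≤ k + 2`. -/
theorem bag_weighted_degree_bound {n : ℕ}
    (G : SimpleGraph (Fin n)) [DecidableRel G.Adj] (k : ℕ)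
    (cutE : ℕ → Finset (Sym2 (Fin n)))
    (hcut : ∀ m e, e ∈ cutE m ↔ e ∈ G.edgeFinset ∧
      ∃ a b : Fin n, e = s(a, b) ∧ (a : ℕ) < m ∧ m ≤ (b : ℕ))
    (hk : ∀ m ≤ n, (cutE m).card ≤ k)
    (j : Fin n)
    (Y : Finset (Fin n))
    (hY : ∀ a, a ∈ Y ↔ (a < j ∧ ∃ b, j ≤ b ∧ G.Adj a b) ∨ a = j)
    (H : SimpleGraph (Fin n)) [DecidableRel H.Adj]
    (hH : ∀ a b, H.Adj a b ↔ G.Adj a b ∧ (j ≤ a ∨ j ≤ b)) :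
    (Y.filter fun u => H.degree u = 1).card +
      2 * (Y.filter fun u => 2 ≤ H.degree u).card ≤ k + 2 := by
  classical
  set S := Y.erase j with hS
  have hjY : j ∈ Y := (hY j).mpr (Or.inr rfl)
  have hSlt : ∀ u ∈ S, u < j := by
    intro u hu
    rcases Finset.mem_erase.mp hu with ⟨hne, huY⟩
    rcases (hY u).mp huY with ⟨hlt, _⟩ | h
    · exact hlt
    · exact absurd h hne
  have hnb : ∀ u ∈ S, ∀ b ∈ H.neighborFinset u, G.Adj u b ∧ j ≤ b := by
    intro u hu b hb
    rw [SimpleGraph.mem_neighborFinset] at hb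
    rcases (hH u b).mp hb with ⟨hadj, hj⟩
    exact ⟨hadj, hj.resolve_left (not_le.mpr (hSlt u hu))⟩
  have hdegsum : (∑ u ∈ S, H.degree u) ≤ k := by
    have hcard : (S.sigma fun u => H.neighborFinset u).card ≤ (cutE j).card := by
      apply Finset.card_le_card_of_injOn (fun p => s(p.1, p.2))
      · rintro ⟨u, b⟩ hp
        rw [Finset.mem_coe, Finset.mem_sigma] at hp
        obtain ⟨hu, hb⟩ := hp
        obtain ⟨hadj, hjb⟩ := hnb u hu b hb
        rw [Finset.mem_coe, hcut]
        refine ⟨SimpleGraph.mem_edgeFinset.mpr hadj, u, b, rfl, ?_, ?_⟩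
        · exact_mod_cast hSlt u hu
        · exact_mod_cast hjb
      · rintro ⟨u, b⟩ hp ⟨u', b'⟩ hp' heq
        rw [Finset.mem_coe, Finset.mem_sigma] at hp hp'
        obtain ⟨hu, hb⟩ := hp
        obtain ⟨hu', hb'⟩ := hp'
        have h2 := (hnb u' hu' b' hb').2
        simp only [Sym2.eq_iff] at heq
        rcases heq with ⟨h3, h4⟩ | ⟨h3, h4⟩
        · simp [h3, h4]
        · exact absurd (h2.trans_lt (h3 ▸ hSlt u hu)) (lt_irrefl j)
    rw [Finset.card_sigma] at hcard
    have hkk := hk j (le_of_lt j.isLt)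
    calc (∑ u ∈ S, H.degree u) = ∑ u ∈ S, (H.neighborFinset u).card := by
          simp [SimpleGraph.card_neighborFinset_eq_degree]
      _ ≤ (cutE j).card := hcard
      _ ≤ k := hkk
  have hdisj : Disjoint (Y.filter fun u => H.degree u = 1)
      (Y.filter fun u => 2 ≤ H.degree u) := by
    exact Finset.disjoint_filter.mpr fun u _ h1 h2 => by omega
  have hsub : (Y.filter fun u => H.degree u = 1) ∪
      (Y.filter fun u => 2 ≤ H.degree u) ⊆ Y :=
    Finset.union_subset (Finset.filter_subset _ _) (Finset.filter_subset _ _)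
  have h1 : (Y.filter fun u => H.degree u = 1).card +
      2 * (Y.filter fun u => 2 ≤ H.degree u).card
      ≤ ∑ u ∈ Y, min (H.degree u) 2 := by
    have e1 : (Y.filter fun u => H.degree u = 1).card
        = ∑ u ∈ Y.filter (fun u => H.degree u = 1), min (H.degree u) 2 := by
      rw [Finset.card_eq_sum_ones]
      refine Finset.sum_congr rfl fun u hu => ?_
      have := (Finset.mem_filter.mp hu).2
      omega
    have e2 : 2 * (Y.filter fun u => 2 ≤ H.degree u).card
        = ∑ u ∈ Y.filter (fun u => 2 ≤ H.degree u), min (H.degree u) 2 := by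
      rw [Finset.card_eq_sum_ones, Finset.mul_sum]
      refine Finset.sum_congr rfl fun u hu => ?_
      have := (Finset.mem_filter.mp hu).2
      omega
    rw [e1, e2, ← Finset.sum_union hdisj]
    exact Finset.sum_le_sum_of_subset hsub
  have h2 : (∑ u ∈ Y, min (H.degree u) 2)
      = min (H.degree j) 2 + ∑ u ∈ S, min (H.degree u) 2 :=
    (Finset.add_sum_erase Y _ hjY).symm
  have h3 : (∑ u ∈ S, min (H.degree u) 2) ≤ ∑ u ∈ S, H.degree u :=
    Finset.sum_le_sum fun u _ => min_le_left _ _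
  have h4 : min (H.degree j) 2 ≤ 2 := min_le_right _ _
  omega
end

section
/- Let G′ be a finite simple graph containing a blocked-edge gadget on vertices u and v with internal vertices a₁, a₂, a₃, b₁, b₂, b₃. Let M be an induced matching of G′ such that no edge of M is incident with any of the six internal vertices and at most one of the vertices u, v is incident with an edge of M. Then there exist two edges e₁, e₂ of the gadget such that M ∪ {e₁, e₂} is an induced matching of G′ of cardinality |M| + 2, and in M ∪ {e₁, e₂} still at most one of the vertices u, v is incident with a matching edge. -/
/-- `M` is an induced matching of `G`: a set of edges of `G` such that any two
distinct edges of `M` share no endpoint and no edge of `G` joins an endpoint of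
one edge of `M` to an endpoint of another. -/
def IsInducedMatching {V : Type*} (G : SimpleGraph V) (M : Finset (Sym2 V)) : Prop :=
  (∀ e ∈ M, e ∈ G.edgeSet) ∧
  ∀ e₁ ∈ M, ∀ e₂ ∈ M, e₁ ≠ e₂ →
    ∀ u v : V, u ∈ e₁ → v ∈ e₂ → u ≠ v ∧ ¬ G.Adj u v

lemma aux_extend {V : Type*} [DecidableEq V] (G : SimpleGraph V)
    (u v p q r s : V)
    (M : Finset (Sym2 V)) (hM : IsInducedMatching G M)
    (hMint : ∀ e ∈ M, ∀ x ∈ ({p, q, r, s} : Finset V), x ∉ e)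
    (hMuv : ¬ ((∃ e ∈ M, u ∈ e) ∧ (∃ e ∈ M, v ∈ e)))
    (hpq : G.Adj p q) (hrs : G.Adj r s)
    (hpr : p ≠ r) (hps : p ≠ s) (hqr : q ≠ r) (hqs : q ≠ s)
    (npr : ¬ G.Adj p r) (nps : ¬ G.Adj p s) (nqr : ¬ G.Adj q r) (nqs : ¬ G.Adj q s)
    (hsafe : ∀ x, (∃ e ∈ M, x ∈ e) → ∀ y ∈ ({p, q, r, s} : Finset V), ¬ G.Adj x y)
    (hu : u ∉ ({p, q, r, s} : Finset V)) (hv : v ∉ ({p, q, r, s} : Finset V)) :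
    IsInducedMatching G (M ∪ {s(p, q), s(r, s)}) ∧
    (M ∪ {s(p, q), s(r, s)}).card = M.card + 2 ∧
    ¬ ((∃ e ∈ M ∪ {s(p, q), s(r, s)}, u ∈ e) ∧
       (∃ e ∈ M ∪ {s(p, q), s(r, s)}, v ∈ e)) := by
  simp only [Finset.mem_insert, Finset.mem_singleton, not_or] at hu hv
  obtain ⟨hup, huq, hur, hus⟩ := hu
  obtain ⟨hvp, hvq, hvr, hvs⟩ := hv
  have key : ∀ e ∈ M, ∀ x ∈ e, ∀ y ∈ ({p, q, r, s} : Finset V), x ≠ y ∧ ¬ G.Adj x y := by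
    intro e he x hx y hy
    exact ⟨fun h => hMint e he y hy (h ▸ hx), hsafe x ⟨e, he, hx⟩ y hy⟩
  have hAM : s(p, q) ∉ M := fun h => hMint _ h p (by simp) (by simp)
  have hBM : s(r, s) ∉ M := fun h => hMint _ h r (by simp) (by simp)
  have hAB : s(p, q) ≠ s(r, s) := by
    intro h
    rw [Sym2.eq_iff] at h
    rcases h with ⟨h1, h2⟩ | ⟨h1, h2⟩
    · exact hpr h1
    · exact hps h1
  refine ⟨⟨?_, ?_⟩, ?_, ?_⟩
  · intro e he
    rw [Finset.mem_union] at he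
    rcases he with he | he
    · exact hM.1 e he
    · simp only [Finset.mem_insert, Finset.mem_singleton] at he
      rcases he with rfl | rfl
      · exact hpq
      · exact hrs
  · intro e₁ he₁ e₂ he₂ hne x y hx hy
    rw [Finset.mem_union] at he₁ he₂
    simp only [Finset.mem_insert, Finset.mem_singleton] at he₁ he₂
    rcases he₁ with he₁ | rfl | rfl <;> rcases he₂ with he₂ | rfl | rfl
    · exact hM.2 e₁ he₁ e₂ he₂ hne x y hx hy
    · rw [Sym2.mem_iff] at hy
      rcases hy with rfl | rfl
      · exact key e₁ he₁ x hx y (by simp)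
      · exact key e₁ he₁ x hx y (by simp)
    · rw [Sym2.mem_iff] at hy
      rcases hy with rfl | rfl
      · exact key e₁ he₁ x hx y (by simp)
      · exact key e₁ he₁ x hx y (by simp)
    · rw [Sym2.mem_iff] at hx
      rcases hx with rfl | rfl
      · have := key e₂ he₂ y hy x (by simp)
        exact ⟨fun h => this.1 h.symm, fun h => this.2 h.symm⟩
      · have := key e₂ he₂ y hy x (by simp)
        exact ⟨fun h => this.1 h.symm, fun h => this.2 h.symm⟩
    · exact absurd rfl hne
    · rw [Sym2.mem_iff] at hx hy
      rcases hx with rfl | rfl <;> rcases hy with rfl | rfl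
      · exact ⟨hpr, npr⟩
      · exact ⟨hps, nps⟩
      · exact ⟨hqr, nqr⟩
      · exact ⟨hqs, nqs⟩
    · rw [Sym2.mem_iff] at hx
      rcases hx with rfl | rfl
      · have := key e₂ he₂ y hy x (by simp)
        exact ⟨fun h => this.1 h.symm, fun h => this.2 h.symm⟩
      · have := key e₂ he₂ y hy x (by simp)
        exact ⟨fun h => this.1 h.symm, fun h => this.2 h.symm⟩
    · rw [Sym2.mem_iff] at hx hy
      rcases hx with rfl | rfl <;> rcases hy with rfl | rfl
      · exact ⟨hpr.symm, fun h => npr h.symm⟩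
      · exact ⟨hqr.symm, fun h => nqr h.symm⟩
      · exact ⟨hps.symm, fun h => nps h.symm⟩
      · exact ⟨hqs.symm, fun h => nqs h.symm⟩
    · exact absurd rfl hne
  · rw [Finset.card_union_of_disjoint (by simp [Finset.disjoint_insert_right, hAM, hBM])]
    simp [hAB]
  · rintro ⟨⟨e, he, hue⟩, ⟨f, hf, hvf⟩⟩
    rw [Finset.mem_union] at he hf
    simp only [Finset.mem_insert, Finset.mem_singleton] at he hf
    have hu' : ∃ e ∈ M, u ∈ e := by
      rcases he with he | rfl | rfl
      · exact ⟨e, he, hue⟩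
      · rw [Sym2.mem_iff] at hue; tauto
      · rw [Sym2.mem_iff] at hue; tauto
    have hv' : ∃ e ∈ M, v ∈ e := by
      rcases hf with hf | rfl | rfl
      · exact ⟨f, hf, hvf⟩
      · rw [Sym2.mem_iff] at hvf; tauto
      · rw [Sym2.mem_iff] at hvf; tauto
    exact hMuv ⟨hu', hv'⟩

set_option maxHeartbeats 3200000 in
lemma notE9_facts {V : Type*} [DecidableEq V] (u v a₁ a₂ a₃ b₁ b₂ b₃ : V)
    (E9 : Finset (Sym2 V))
    (hE9 : E9 = {s(u, v), s(u, a₁), s(a₁, a₂), s(a₂, a₃), s(a₃, v),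
                 s(u, b₁), s(b₁, b₂), s(b₂, b₃), s(b₃, v)})
    (huv : ¬u = v) (hua1 : ¬u = a₁) (hua2 : ¬u = a₂) (hua3 : ¬u = a₃)
    (hub1 : ¬u = b₁) (hub2 : ¬u = b₂) (hub3 : ¬u = b₃)
    (hva1 : ¬v = a₁) (hva2 : ¬v = a₂) (hva3 : ¬v = a₃)
    (hvb1 : ¬v = b₁) (hvb2 : ¬v = b₂) (hvb3 : ¬v = b₃)
    (h1a2 : ¬a₁ = a₂) (h1a3 : ¬a₁ = a₃) (h1b1 : ¬a₁ = b₁) (h1b2 : ¬a₁ = b₂)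
    (h1b3 : ¬a₁ = b₃)
    (h2a3 : ¬a₂ = a₃) (h2b1 : ¬a₂ = b₁) (h2b2 : ¬a₂ = b₂) (h2b3 : ¬a₂ = b₃)
    (h3b1 : ¬a₃ = b₁) (h3b2 : ¬a₃ = b₂) (h3b3 : ¬a₃ = b₃)
    (hb12 : ¬b₁ = b₂) (hb13 : ¬b₁ = b₃) (hb23 : ¬b₂ = b₃) :
    s(a₁, b₁) ∉ E9 ∧ s(a₁, b₂) ∉ E9 ∧ s(a₂, b₁) ∉ E9 ∧ s(a₂, b₂) ∉ E9 ∧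
    s(v, a₁) ∉ E9 ∧ s(v, a₂) ∉ E9 ∧ s(v, b₁) ∉ E9 ∧ s(v, b₂) ∉ E9 ∧
    s(a₂, b₃) ∉ E9 ∧ s(a₃, b₂) ∉ E9 ∧ s(a₃, b₃) ∉ E9 ∧
    s(u, a₂) ∉ E9 ∧ s(u, a₃) ∉ E9 ∧ s(u, b₂) ∉ E9 ∧ s(u, b₃) ∉ E9 := by
  refine ⟨?_, ?_, ?_, ?_, ?_, ?_, ?_, ?_, ?_, ?_, ?_, ?_, ?_, ?_, ?_⟩ <;>
    · simp only [hE9, Finset.mem_insert, Finset.mem_singleton, Sym2.eq_iff]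
      tauto

set_option maxHeartbeats 4000000 in
/-- Given a blocked-edge gadget on `u, v` in `G′` and an induced
matching `M` whose edges avoid the six internal vertices and are incident with at
most one of `u, v`, two gadget edges can be added to `M` so that the result is an
induced matching of cardinality `|M| + 2`, still incident with at most one of
`u, v`. -/
theorem blockedEdge_extend_matching {V : Type*} [Fintype V] [DecidableEq V]
    (G : SimpleGraph V) (u v a₁ a₂ a₃ b₁ b₂ b₃ : V)
    (hdist : ([u, v, a₁, a₂, a₃, b₁, b₂, b₃] : List V).Nodup)
    (S : Finset V) (hS : S = {u, v, a₁, a₂, a₃, b₁, b₂, b₃})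
    (E9 : Finset (Sym2 V))
    (hE9 : E9 = {s(u, v), s(u, a₁), s(a₁, a₂), s(a₂, a₃), s(a₃, v),
                 s(u, b₁), s(b₁, b₂), s(b₂, b₃), s(b₃, v)})
    (hGadgetEdges : ∀ x ∈ S, ∀ y ∈ S, (G.Adj x y ↔ s(x, y) ∈ E9))
    (hInternal : ∀ x ∈ ({a₁, a₂, a₃, b₁, b₂, b₃} : Finset V), ∀ y, G.Adj x y → y ∈ S)
    (M : Finset (Sym2 V)) (hM : IsInducedMatching G M)
    (hMint : ∀ e ∈ M, ∀ x ∈ ({a₁, a₂, a₃, b₁, b₂, b₃} : Finset V), x ∉ e)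
    (hMuv : ¬ ((∃ e ∈ M, u ∈ e) ∧ (∃ e ∈ M, v ∈ e))) :
    ∃ e₁ ∈ E9, ∃ e₂ ∈ E9, e₁ ≠ e₂ ∧
      IsInducedMatching G (M ∪ {e₁, e₂}) ∧
      (M ∪ {e₁, e₂}).card = M.card + 2 ∧
      ¬ ((∃ e ∈ M ∪ {e₁, e₂}, u ∈ e) ∧ (∃ e ∈ M ∪ {e₁, e₂}, v ∈ e)) := by
  simp only [List.nodup_cons, List.mem_cons, List.not_mem_nil, or_false, not_or,
    List.nodup_nil, and_true] at hdist
  obtain ⟨⟨huv, hua1, hua2, hua3, hub1, hub2, hub3⟩,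
    ⟨hva1, hva2, hva3, hvb1, hvb2, hvb3⟩,
    ⟨h1a2, h1a3, h1b1, h1b2, h1b3⟩,
    ⟨h2a3, h2b1, h2b2, h2b3⟩,
    ⟨h3b1, h3b2, h3b3⟩, ⟨hb12, hb13⟩, hb23, -⟩ := hdist
  obtain ⟨nm11, nm12, nm21, nm22, nmva1, nmva2, nmvb1, nmvb2,
    nm23, nm32, nm33, nmua2, nmua3, nmub2, nmub3⟩ :=
    notE9_facts u v a₁ a₂ a₃ b₁ b₂ b₃ E9 hE9 huv hua1 hua2 hua3 hub1 hub2 hub3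
      hva1 hva2 hva3 hvb1 hvb2 hvb3 h1a2 h1a3 h1b1 h1b2 h1b3 h2a3 h2b1 h2b2 h2b3
      h3b1 h3b2 h3b3 hb12 hb13 hb23
  have hmemS : ∀ x ∈ ({u, v, a₁, a₂, a₃, b₁, b₂, b₃} : Finset V), x ∈ S := by
    intro x hx; rw [hS]; exact hx
  have adj : ∀ x ∈ S, ∀ y ∈ S, s(x, y) ∈ E9 → G.Adj x y := by
    intro x hx y hy h; exact (hGadgetEdges x hx y hy).2 h
  have nadj : ∀ x ∈ S, ∀ y ∈ S, s(x, y) ∉ E9 → ¬ G.Adj x y := by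
    intro x hx y hy h hadj; exact h ((hGadgetEdges x hx y hy).1 hadj)
  by_cases hvm : ∃ e ∈ M, v ∈ e
  · -- v is matched, u is not: use s(a₁, a₂) and s(b₁, b₂)
    have hu' : ¬ ∃ e ∈ M, u ∈ e := fun h => hMuv ⟨h, hvm⟩
    refine ⟨s(a₁, a₂), (by rw [hE9]; exact (Finset.mem_insert_of_mem (Finset.mem_insert_of_mem (Finset.mem_insert_self _ _)))), s(b₁, b₂), (by rw [hE9]; exact (Finset.mem_insert_of_mem (Finset.mem_insert_of_mem (Finset.mem_insert_of_mem (Finset.mem_insert_of_mem (Finset.mem_insert_of_mem (Finset.mem_insert_of_mem (Finset.mem_insert_self _ _)))))))), ?_, ?_⟩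
    · intro h
      rw [Sym2.eq_iff] at h
      rcases h with ⟨h1, h2⟩ | ⟨h1, h2⟩
      · exact h1b1 h1
      · exact h1b2 h1
    refine aux_extend G u v a₁ a₂ b₁ b₂ M hM ?_ hMuv ?_ ?_ h1b1 h1b2 h2b1 h2b2
      ?_ ?_ ?_ ?_ ?_ (by simp [hua1, hua2, hub1, hub2]) (by simp [hva1, hva2, hvb1, hvb2])
    · intro e he x hx
      refine hMint e he x ?_
      simp only [Finset.mem_insert, Finset.mem_singleton] at hx ⊢; tauto
    · exact adj a₁ (hmemS _ (by simp)) a₂ (hmemS _ (by simp)) (by rw [hE9]; exact (Finset.mem_insert_of_mem (Finset.mem_insert_of_mem (Finset.mem_insert_self _ _))))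
    · exact adj b₁ (hmemS _ (by simp)) b₂ (hmemS _ (by simp)) (by rw [hE9]; exact (Finset.mem_insert_of_mem (Finset.mem_insert_of_mem (Finset.mem_insert_of_mem (Finset.mem_insert_of_mem (Finset.mem_insert_of_mem (Finset.mem_insert_of_mem (Finset.mem_insert_self _ _))))))))
    · exact nadj a₁ (hmemS _ (by simp)) b₁ (hmemS _ (by simp)) nm11
    · exact nadj a₁ (hmemS _ (by simp)) b₂ (hmemS _ (by simp)) nm12
    · exact nadj a₂ (hmemS _ (by simp)) b₁ (hmemS _ (by simp)) nm21
    · exact nadj a₂ (hmemS _ (by simp)) b₂ (hmemS _ (by simp)) nm22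
    · intro x hx y hy hadj
      have hy6 : y ∈ ({a₁, a₂, a₃, b₁, b₂, b₃} : Finset V) := by
        simp only [Finset.mem_insert, Finset.mem_singleton] at hy ⊢; tauto
      have hxS : x ∈ S := hInternal y hy6 x hadj.symm
      rw [hS] at hxS
      simp only [Finset.mem_insert, Finset.mem_singleton] at hxS hy
      obtain ⟨e, he, hxe⟩ := hx
      rcases hxS with h | h | h | h | h | h | h | h
      · exact hu' ⟨e, he, h ▸ hxe⟩
      · rw [h] at hadj
        rcases hy with h' | h' | h' | h' <;> rw [h'] at hadj
        · exact nadj v (hmemS _ (by simp)) a₁ (hmemS _ (by simp)) nmva1 hadj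
        · exact nadj v (hmemS _ (by simp)) a₂ (hmemS _ (by simp)) nmva2 hadj
        · exact nadj v (hmemS _ (by simp)) b₁ (hmemS _ (by simp)) nmvb1 hadj
        · exact nadj v (hmemS _ (by simp)) b₂ (hmemS _ (by simp)) nmvb2 hadj
      all_goals exact hMint e he x (by rw [h]; simp) hxe
  · -- v is not matched: use s(a₂, a₃) and s(b₂, b₃)
    refine ⟨s(a₂, a₃), (by rw [hE9]; exact (Finset.mem_insert_of_mem (Finset.mem_insert_of_mem (Finset.mem_insert_of_mem (Finset.mem_insert_self _ _))))), s(b₂, b₃), (by rw [hE9]; exact (Finset.mem_insert_of_mem (Finset.mem_insert_of_mem (Finset.mem_insert_of_mem (Finset.mem_insert_of_mem (Finset.mem_insert_of_mem (Finset.mem_insert_of_mem (Finset.mem_insert_of_mem (Finset.mem_insert_self _ _))))))))), ?_, ?_⟩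
    · intro h
      rw [Sym2.eq_iff] at h
      rcases h with ⟨h1, h2⟩ | ⟨h1, h2⟩
      · exact h2b2 h1
      · exact h2b3 h1
    refine aux_extend G u v a₂ a₃ b₂ b₃ M hM ?_ hMuv ?_ ?_ h2b2 h2b3 h3b2 h3b3
      ?_ ?_ ?_ ?_ ?_ (by simp [hua2, hua3, hub2, hub3]) (by simp [hva2, hva3, hvb2, hvb3])
    · intro e he x hx
      refine hMint e he x ?_
      simp only [Finset.mem_insert, Finset.mem_singleton] at hx ⊢; tauto
    · exact adj a₂ (hmemS _ (by simp)) a₃ (hmemS _ (by simp)) (by rw [hE9]; exact (Finset.mem_insert_of_mem (Finset.mem_insert_of_mem (Finset.mem_insert_of_mem (Finset.mem_insert_self _ _)))))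
    · exact adj b₂ (hmemS _ (by simp)) b₃ (hmemS _ (by simp)) (by rw [hE9]; exact (Finset.mem_insert_of_mem (Finset.mem_insert_of_mem (Finset.mem_insert_of_mem (Finset.mem_insert_of_mem (Finset.mem_insert_of_mem (Finset.mem_insert_of_mem (Finset.mem_insert_of_mem (Finset.mem_insert_self _ _)))))))))
    · exact nadj a₂ (hmemS _ (by simp)) b₂ (hmemS _ (by simp)) nm22
    · exact nadj a₂ (hmemS _ (by simp)) b₃ (hmemS _ (by simp)) nm23
    · exact nadj a₃ (hmemS _ (by simp)) b₂ (hmemS _ (by simp)) nm32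
    · exact nadj a₃ (hmemS _ (by simp)) b₃ (hmemS _ (by simp)) nm33
    · intro x hx y hy hadj
      have hy6 : y ∈ ({a₁, a₂, a₃, b₁, b₂, b₃} : Finset V) := by
        simp only [Finset.mem_insert, Finset.mem_singleton] at hy ⊢; tauto
      have hxS : x ∈ S := hInternal y hy6 x hadj.symm
      rw [hS] at hxS
      simp only [Finset.mem_insert, Finset.mem_singleton] at hxS hy
      obtain ⟨e, he, hxe⟩ := hx
      rcases hxS with h | h | h | h | h | h | h | h
      · rw [h] at hadj
        rcases hy with h' | h' | h' | h' <;> rw [h'] at hadj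
        · exact nadj u (hmemS _ (by simp)) a₂ (hmemS _ (by simp)) nmua2 hadj
        · exact nadj u (hmemS _ (by simp)) a₃ (hmemS _ (by simp)) nmua3 hadj
        · exact nadj u (hmemS _ (by simp)) b₂ (hmemS _ (by simp)) nmub2 hadj
        · exact nadj u (hmemS _ (by simp)) b₃ (hmemS _ (by simp)) nmub3 hadj
      · exact hvm ⟨e, he, h ▸ hxe⟩
      all_goals exact hMint e he x (by rw [h]; simp) hxe
end

section
/- Let G′ be a finite simple graph containing a blocked-edge gadget on vertices u and v with internal vertices a₁, a₂, a₃, b₁, b₂, b₃, and let M be a maximum induced matching of G′ (i.e., no induced matching of G′ has larger cardinality). Then M contains exactly two of the nine gadget edges, and the edges of M are incident with at most one of the two vertices u, v. -/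
private lemma im_subset {V : Type*} {G : SimpleGraph V} {M M' : Finset (Sym2 V)}
    (h : IsInducedMatching G M) (hs : M' ⊆ M) : IsInducedMatching G M' :=
  ⟨fun e he => h.1 e (hs he), fun e₁ h₁ e₂ h₂ => h.2 e₁ (hs h₁) e₂ (hs h₂)⟩

private lemma im_insert {V : Type*} [DecidableEq V] {G : SimpleGraph V} {M : Finset (Sym2 V)}
    (h : IsInducedMatching G M) {x y : V} (hxy : G.Adj x y)
    (hsep : ∀ e ∈ M, ∀ w ∈ e, w ≠ x ∧ ¬ G.Adj w x ∧ w ≠ y ∧ ¬ G.Adj w y) :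
    IsInducedMatching G (insert s(x, y) M) := by
  constructor
  · intro e he
    rcases Finset.mem_insert.1 he with rfl | he
    · exact hxy
    · exact h.1 e he
  · intro e₁ h₁ e₂ h₂ hne p q hp hq
    rcases Finset.mem_insert.1 h₁ with rfl | h₁ <;> rcases Finset.mem_insert.1 h₂ with rfl | h₂
    · exact absurd rfl hne
    · obtain ⟨c1, c2, c3, c4⟩ := hsep e₂ h₂ q hq
      rcases Sym2.mem_iff.1 hp with rfl | rfl
      · exact ⟨Ne.symm c1, fun hA => c2 hA.symm⟩
      · exact ⟨Ne.symm c3, fun hA => c4 hA.symm⟩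
    · obtain ⟨c1, c2, c3, c4⟩ := hsep e₁ h₁ p hp
      rcases Sym2.mem_iff.1 hq with rfl | rfl
      · exact ⟨c1, c2⟩
      · exact ⟨c3, c4⟩
    · exact h.2 e₁ h₁ e₂ h₂ hne p q hp hq

/-- A maximum induced matching of a graph containing a blocked-edge
gadget on `u, v` contains exactly two of the nine gadget edges, and its edges are
incident with at most one of the two vertices `u, v`. -/
theorem blockedEdge_maximum_matching {V : Type*} [Fintype V] [DecidableEq V]
    (G : SimpleGraph V) (u v a₁ a₂ a₃ b₁ b₂ b₃ : V)
    (hdist : ([u, v, a₁, a₂, a₃, b₁, b₂, b₃] : List V).Nodup)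
    (S : Finset V) (hS : S = {u, v, a₁, a₂, a₃, b₁, b₂, b₃})
    (E9 : Finset (Sym2 V))
    (hE9 : E9 = {s(u, v), s(u, a₁), s(a₁, a₂), s(a₂, a₃), s(a₃, v),
                 s(u, b₁), s(b₁, b₂), s(b₂, b₃), s(b₃, v)})
    (hGadgetEdges : ∀ x ∈ S, ∀ y ∈ S, (G.Adj x y ↔ s(x, y) ∈ E9))
    (hInternal : ∀ x ∈ ({a₁, a₂, a₃, b₁, b₂, b₃} : Finset V), ∀ y, G.Adj x y → y ∈ S)
    (M : Finset (Sym2 V)) (hM : IsInducedMatching G M)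
    (hmax : ∀ M' : Finset (Sym2 V), IsInducedMatching G M' → M'.card ≤ M.card) :
    (M ∩ E9).card = 2 ∧
    ¬ ((∃ e ∈ M, u ∈ e) ∧ (∃ e ∈ M, v ∈ e)) := by
  simp only [List.nodup_cons, List.mem_cons, List.not_mem_nil, or_false, not_or,
    List.nodup_nil, and_true] at hdist
  obtain ⟨⟨n12,n13,n14,n15,n16,n17,n18⟩,⟨n23,n24,n25,n26,n27,n28⟩,⟨n34,n35,n36,n37,n38⟩,
    ⟨n45,n46,n47,n48⟩,⟨n56,n57,n58⟩,⟨n67,n68⟩,⟨n78,-⟩⟩ := hdist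
  have adj_uv : G.Adj u v := (hGadgetEdges u (by simp [hS]) v (by simp [hS])).2 (by simp [hE9])
  have adj_ua1 : G.Adj u a₁ := (hGadgetEdges u (by simp [hS]) a₁ (by simp [hS])).2 (by simp [hE9])
  have adj_a1a2 : G.Adj a₁ a₂ := (hGadgetEdges a₁ (by simp [hS]) a₂ (by simp [hS])).2 (by simp [hE9])
  have adj_a2a3 : G.Adj a₂ a₃ := (hGadgetEdges a₂ (by simp [hS]) a₃ (by simp [hS])).2 (by simp [hE9])
  have adj_a3v : G.Adj a₃ v := (hGadgetEdges a₃ (by simp [hS]) v (by simp [hS])).2 (by simp [hE9])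
  have adj_ub1 : G.Adj u b₁ := (hGadgetEdges u (by simp [hS]) b₁ (by simp [hS])).2 (by simp [hE9])
  have adj_b1b2 : G.Adj b₁ b₂ := (hGadgetEdges b₁ (by simp [hS]) b₂ (by simp [hS])).2 (by simp [hE9])
  have adj_b2b3 : G.Adj b₂ b₃ := (hGadgetEdges b₂ (by simp [hS]) b₃ (by simp [hS])).2 (by simp [hE9])
  have adj_b3v : G.Adj b₃ v := (hGadgetEdges b₃ (by simp [hS]) v (by simp [hS])).2 (by simp [hE9])
  have nb_a1 : ∀ y, G.Adj a₁ y → y = u ∨ y = a₂ := by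
    intro y hy
    have hyS := hInternal a₁ (by simp) y hy
    rw [hGadgetEdges a₁ (by simp [hS]) y hyS] at hy
    simp only [hE9, Finset.mem_insert, Finset.mem_singleton, Sym2.eq_iff,
      n12,n13,n14,n15,n16,n17,n18,n23,n24,n25,n26,n27,n28,n34,n35,n36,n37,n38,n45,n46,n47,n48,n56,n57,n58,n67,n68,n78,Ne.symm n12,Ne.symm n13,Ne.symm n14,Ne.symm n15,Ne.symm n16,Ne.symm n17,Ne.symm n18,Ne.symm n23,Ne.symm n24,Ne.symm n25,Ne.symm n26,Ne.symm n27,Ne.symm n28,Ne.symm n34,Ne.symm n35,Ne.symm n36,Ne.symm n37,Ne.symm n38,Ne.symm n45,Ne.symm n46,Ne.symm n47,Ne.symm n48,Ne.symm n56,Ne.symm n57,Ne.symm n58,Ne.symm n67,Ne.symm n68,Ne.symm n78,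
      false_and, and_false, false_or, or_false, true_and, and_true, or_self] at hy
    first | exact hy | tauto
  have nb_a2 : ∀ y, G.Adj a₂ y → y = a₁ ∨ y = a₃ := by
    intro y hy
    have hyS := hInternal a₂ (by simp) y hy
    rw [hGadgetEdges a₂ (by simp [hS]) y hyS] at hy
    simp only [hE9, Finset.mem_insert, Finset.mem_singleton, Sym2.eq_iff,
      n12,n13,n14,n15,n16,n17,n18,n23,n24,n25,n26,n27,n28,n34,n35,n36,n37,n38,n45,n46,n47,n48,n56,n57,n58,n67,n68,n78,Ne.symm n12,Ne.symm n13,Ne.symm n14,Ne.symm n15,Ne.symm n16,Ne.symm n17,Ne.symm n18,Ne.symm n23,Ne.symm n24,Ne.symm n25,Ne.symm n26,Ne.symm n27,Ne.symm n28,Ne.symm n34,Ne.symm n35,Ne.symm n36,Ne.symm n37,Ne.symm n38,Ne.symm n45,Ne.symm n46,Ne.symm n47,Ne.symm n48,Ne.symm n56,Ne.symm n57,Ne.symm n58,Ne.symm n67,Ne.symm n68,Ne.symm n78,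
      false_and, and_false, false_or, or_false, true_and, and_true, or_self] at hy
    first | exact hy | tauto
  have nb_a3 : ∀ y, G.Adj a₃ y → y = a₂ ∨ y = v := by
    intro y hy
    have hyS := hInternal a₃ (by simp) y hy
    rw [hGadgetEdges a₃ (by simp [hS]) y hyS] at hy
    simp only [hE9, Finset.mem_insert, Finset.mem_singleton, Sym2.eq_iff,
      n12,n13,n14,n15,n16,n17,n18,n23,n24,n25,n26,n27,n28,n34,n35,n36,n37,n38,n45,n46,n47,n48,n56,n57,n58,n67,n68,n78,Ne.symm n12,Ne.symm n13,Ne.symm n14,Ne.symm n15,Ne.symm n16,Ne.symm n17,Ne.symm n18,Ne.symm n23,Ne.symm n24,Ne.symm n25,Ne.symm n26,Ne.symm n27,Ne.symm n28,Ne.symm n34,Ne.symm n35,Ne.symm n36,Ne.symm n37,Ne.symm n38,Ne.symm n45,Ne.symm n46,Ne.symm n47,Ne.symm n48,Ne.symm n56,Ne.symm n57,Ne.symm n58,Ne.symm n67,Ne.symm n68,Ne.symm n78,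
      false_and, and_false, false_or, or_false, true_and, and_true, or_self] at hy
    first | exact hy | tauto
  have nb_b1 : ∀ y, G.Adj b₁ y → y = u ∨ y = b₂ := by
    intro y hy
    have hyS := hInternal b₁ (by simp) y hy
    rw [hGadgetEdges b₁ (by simp [hS]) y hyS] at hy
    simp only [hE9, Finset.mem_insert, Finset.mem_singleton, Sym2.eq_iff,
      n12,n13,n14,n15,n16,n17,n18,n23,n24,n25,n26,n27,n28,n34,n35,n36,n37,n38,n45,n46,n47,n48,n56,n57,n58,n67,n68,n78,Ne.symm n12,Ne.symm n13,Ne.symm n14,Ne.symm n15,Ne.symm n16,Ne.symm n17,Ne.symm n18,Ne.symm n23,Ne.symm n24,Ne.symm n25,Ne.symm n26,Ne.symm n27,Ne.symm n28,Ne.symm n34,Ne.symm n35,Ne.symm n36,Ne.symm n37,Ne.symm n38,Ne.symm n45,Ne.symm n46,Ne.symm n47,Ne.symm n48,Ne.symm n56,Ne.symm n57,Ne.symm n58,Ne.symm n67,Ne.symm n68,Ne.symm n78,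
      false_and, and_false, false_or, or_false, true_and, and_true, or_self] at hy
    first | exact hy | tauto
  have nb_b2 : ∀ y, G.Adj b₂ y → y = b₁ ∨ y = b₃ := by
    intro y hy
    have hyS := hInternal b₂ (by simp) y hy
    rw [hGadgetEdges b₂ (by simp [hS]) y hyS] at hy
    simp only [hE9, Finset.mem_insert, Finset.mem_singleton, Sym2.eq_iff,
      n12,n13,n14,n15,n16,n17,n18,n23,n24,n25,n26,n27,n28,n34,n35,n36,n37,n38,n45,n46,n47,n48,n56,n57,n58,n67,n68,n78,Ne.symm n12,Ne.symm n13,Ne.symm n14,Ne.symm n15,Ne.symm n16,Ne.symm n17,Ne.symm n18,Ne.symm n23,Ne.symm n24,Ne.symm n25,Ne.symm n26,Ne.symm n27,Ne.symm n28,Ne.symm n34,Ne.symm n35,Ne.symm n36,Ne.symm n37,Ne.symm n38,Ne.symm n45,Ne.symm n46,Ne.symm n47,Ne.symm n48,Ne.symm n56,Ne.symm n57,Ne.symm n58,Ne.symm n67,Ne.symm n68,Ne.symm n78,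
      false_and, and_false, false_or, or_false, true_and, and_true, or_self] at hy
    first | exact hy | tauto
  have nb_b3 : ∀ y, G.Adj b₃ y → y = b₂ ∨ y = v := by
    intro y hy
    have hyS := hInternal b₃ (by simp) y hy
    rw [hGadgetEdges b₃ (by simp [hS]) y hyS] at hy
    simp only [hE9, Finset.mem_insert, Finset.mem_singleton, Sym2.eq_iff,
      n12,n13,n14,n15,n16,n17,n18,n23,n24,n25,n26,n27,n28,n34,n35,n36,n37,n38,n45,n46,n47,n48,n56,n57,n58,n67,n68,n78,Ne.symm n12,Ne.symm n13,Ne.symm n14,Ne.symm n15,Ne.symm n16,Ne.symm n17,Ne.symm n18,Ne.symm n23,Ne.symm n24,Ne.symm n25,Ne.symm n26,Ne.symm n27,Ne.symm n28,Ne.symm n34,Ne.symm n35,Ne.symm n36,Ne.symm n37,Ne.symm n38,Ne.symm n45,Ne.symm n46,Ne.symm n47,Ne.symm n48,Ne.symm n56,Ne.symm n57,Ne.symm n58,Ne.symm n67,Ne.symm n68,Ne.symm n78,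
      false_and, and_false, false_or, or_false, true_and, and_true, or_self] at hy
    first | exact hy | tauto
  have edge_a1 : ∀ e ∈ M, a₁ ∈ e → e = s(u, a₁) ∨ e = s(a₁, a₂) := by
    intro e he hmem
    have hE := hM.1 e he
    obtain ⟨⟨x, y⟩, rfl⟩ := e.exists_rep
    rw [SimpleGraph.mem_edgeSet] at hE
    rw [Sym2.mem_iff] at hmem
    rcases hmem with rfl | rfl
    · rcases nb_a1 y hE with rfl | rfl
      · exact Or.inl Sym2.eq_swap
      · exact Or.inr rfl
    · rcases nb_a1 x hE.symm with rfl | rfl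
      · exact Or.inl rfl
      · exact Or.inr Sym2.eq_swap
  have edge_a2 : ∀ e ∈ M, a₂ ∈ e → e = s(a₁, a₂) ∨ e = s(a₂, a₃) := by
    intro e he hmem
    have hE := hM.1 e he
    obtain ⟨⟨x, y⟩, rfl⟩ := e.exists_rep
    rw [SimpleGraph.mem_edgeSet] at hE
    rw [Sym2.mem_iff] at hmem
    rcases hmem with rfl | rfl
    · rcases nb_a2 y hE with rfl | rfl
      · exact Or.inl Sym2.eq_swap
      · exact Or.inr rfl
    · rcases nb_a2 x hE.symm with rfl | rfl
      · exact Or.inl rfl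
      · exact Or.inr Sym2.eq_swap
  have edge_a3 : ∀ e ∈ M, a₃ ∈ e → e = s(a₂, a₃) ∨ e = s(a₃, v) := by
    intro e he hmem
    have hE := hM.1 e he
    obtain ⟨⟨x, y⟩, rfl⟩ := e.exists_rep
    rw [SimpleGraph.mem_edgeSet] at hE
    rw [Sym2.mem_iff] at hmem
    rcases hmem with rfl | rfl
    · rcases nb_a3 y hE with rfl | rfl
      · exact Or.inl Sym2.eq_swap
      · exact Or.inr rfl
    · rcases nb_a3 x hE.symm with rfl | rfl
      · exact Or.inl rfl
      · exact Or.inr Sym2.eq_swap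
  have edge_b1 : ∀ e ∈ M, b₁ ∈ e → e = s(u, b₁) ∨ e = s(b₁, b₂) := by
    intro e he hmem
    have hE := hM.1 e he
    obtain ⟨⟨x, y⟩, rfl⟩ := e.exists_rep
    rw [SimpleGraph.mem_edgeSet] at hE
    rw [Sym2.mem_iff] at hmem
    rcases hmem with rfl | rfl
    · rcases nb_b1 y hE with rfl | rfl
      · exact Or.inl Sym2.eq_swap
      · exact Or.inr rfl
    · rcases nb_b1 x hE.symm with rfl | rfl
      · exact Or.inl rfl
      · exact Or.inr Sym2.eq_swap
  have edge_b2 : ∀ e ∈ M, b₂ ∈ e → e = s(b₁, b₂) ∨ e = s(b₂, b₃) := by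
    intro e he hmem
    have hE := hM.1 e he
    obtain ⟨⟨x, y⟩, rfl⟩ := e.exists_rep
    rw [SimpleGraph.mem_edgeSet] at hE
    rw [Sym2.mem_iff] at hmem
    rcases hmem with rfl | rfl
    · rcases nb_b2 y hE with rfl | rfl
      · exact Or.inl Sym2.eq_swap
      · exact Or.inr rfl
    · rcases nb_b2 x hE.symm with rfl | rfl
      · exact Or.inl rfl
      · exact Or.inr Sym2.eq_swap
  have edge_b3 : ∀ e ∈ M, b₃ ∈ e → e = s(b₂, b₃) ∨ e = s(b₃, v) := by
    intro e he hmem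
    have hE := hM.1 e he
    obtain ⟨⟨x, y⟩, rfl⟩ := e.exists_rep
    rw [SimpleGraph.mem_edgeSet] at hE
    rw [Sym2.mem_iff] at hmem
    rcases hmem with rfl | rfl
    · rcases nb_b3 y hE with rfl | rfl
      · exact Or.inl Sym2.eq_swap
      · exact Or.inr rfl
    · rcases nb_b3 x hE.symm with rfl | rfl
      · exact Or.inl rfl
      · exact Or.inr Sym2.eq_swap
  have bad : ∀ e₁ ∈ M, ∀ e₂ ∈ M, e₁ ≠ e₂ → ∀ x y : V, x ∈ e₁ → y ∈ e₂ → ¬ G.Adj x y :=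
    fun e₁ h₁ e₂ h₂ hne x y hx hy => (hM.2 e₁ h₁ e₂ h₂ hne x y hx hy).2
  have bad2 : ∀ e₁ ∈ M, ∀ e₂ ∈ M, e₁ ≠ e₂ → ∀ x : V, x ∈ e₁ → x ∈ e₂ → False :=
    fun e₁ h₁ e₂ h₂ hne x hx hy => (hM.2 e₁ h₁ e₂ h₂ hne x x hx hy).1 rfl
  -- s(u,v) is not in M
  have huvM : s(u, v) ∉ M := by
    intro huv
    have hno : ∀ e ∈ M, e ≠ s(u, v) → ∀ w, w ∈ e →
        w ≠ u ∧ ¬ G.Adj w u ∧ w ≠ v ∧ ¬ G.Adj w v := by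
      intro e he hne w hw
      obtain ⟨c1, c2⟩ := hM.2 e he s(u, v) huv hne w u hw (by simp)
      obtain ⟨c3, c4⟩ := hM.2 e he s(u, v) huv hne w v hw (by simp)
      exact ⟨c1, c2, c3, c4⟩
    have unt_u : ∀ e ∈ M, e ≠ s(u, v) → u ∉ e := fun e he hne hm => (hno e he hne u hm).1 rfl
    have unt_v : ∀ e ∈ M, e ≠ s(u, v) → v ∉ e := fun e he hne hm => (hno e he hne v hm).2.2.1 rfl
    have unt_a1 : ∀ e ∈ M, a₁ ∉ e := by
      intro e he hmem
      by_cases hne : e = s(u, v)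
      · subst hne
        rcases Sym2.mem_iff.1 hmem with h | h
        · exact n13 h.symm
        · exact n23 h.symm
      · exact (hno e he hne a₁ hmem).2.1 adj_ua1.symm
    have unt_a3 : ∀ e ∈ M, a₃ ∉ e := by
      intro e he hmem
      by_cases hne : e = s(u, v)
      · subst hne
        rcases Sym2.mem_iff.1 hmem with h | h
        · exact n15 h.symm
        · exact n25 h.symm
      · exact (hno e he hne a₃ hmem).2.2.2 adj_a3v
    have unt_b1 : ∀ e ∈ M, b₁ ∉ e := by
      intro e he hmem
      by_cases hne : e = s(u, v)
      · subst hne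
        rcases Sym2.mem_iff.1 hmem with h | h
        · exact n16 h.symm
        · exact n26 h.symm
      · exact (hno e he hne b₁ hmem).2.1 adj_ub1.symm
    have unt_b3 : ∀ e ∈ M, b₃ ∉ e := by
      intro e he hmem
      by_cases hne : e = s(u, v)
      · subst hne
        rcases Sym2.mem_iff.1 hmem with h | h
        · exact n18 h.symm
        · exact n28 h.symm
      · exact (hno e he hne b₃ hmem).2.2.2 adj_b3v
    have unt_a2 : ∀ e ∈ M, a₂ ∉ e := by
      intro e he hmem
      rcases edge_a2 e he hmem with rfl | rfl
      · exact unt_a1 _ he (by simp)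
      · exact unt_a3 _ he (by simp)
    have unt_b2 : ∀ e ∈ M, b₂ ∉ e := by
      intro e he hmem
      rcases edge_b2 e he hmem with rfl | rfl
      · exact unt_b1 _ he (by simp)
      · exact unt_b3 _ he (by simp)
    have hM0sub : M.erase s(u, v) ⊆ M := Finset.erase_subset _ _
    have hM0im : IsInducedMatching G (M.erase s(u, v)) := im_subset hM hM0sub
    have hsep1 : ∀ e ∈ M.erase s(u, v), ∀ w ∈ e,
        w ≠ b₁ ∧ ¬ G.Adj w b₁ ∧ w ≠ b₂ ∧ ¬ G.Adj w b₂ := by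
      intro e he w hw
      have heM := hM0sub he
      have hene : e ≠ s(u, v) := Finset.ne_of_mem_erase he
      refine ⟨?_, ?_, ?_, ?_⟩
      · rintro rfl; exact unt_b1 e heM hw
      · intro hA
        rcases nb_b1 w hA.symm with rfl | rfl
        · exact unt_u e heM hene hw
        · exact unt_b2 e heM hw
      · rintro rfl; exact unt_b2 e heM hw
      · intro hA
        rcases nb_b2 w hA.symm with rfl | rfl
        · exact unt_b1 e heM hw
        · exact unt_b3 e heM hw
    have him1 : IsInducedMatching G (insert s(b₁, b₂) (M.erase s(u, v))) :=
      im_insert hM0im adj_b1b2 hsep1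
    have hsep2 : ∀ e ∈ insert s(b₁, b₂) (M.erase s(u, v)), ∀ w ∈ e,
        w ≠ a₁ ∧ ¬ G.Adj w a₁ ∧ w ≠ a₂ ∧ ¬ G.Adj w a₂ := by
      intro e he w hw
      rcases Finset.mem_insert.1 he with rfl | he
      · rcases Sym2.mem_iff.1 hw with rfl | rfl
        · refine ⟨Ne.symm n36, ?_, Ne.symm n46, ?_⟩
          · intro hA
            rcases nb_b1 a₁ hA with h | h
            · exact n13 h.symm
            · exact n37 h
          · intro hA
            rcases nb_b1 a₂ hA with h | h
            · exact n14 h.symm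
            · exact n47 h
        · refine ⟨Ne.symm n37, ?_, Ne.symm n47, ?_⟩
          · intro hA
            rcases nb_b2 a₁ hA with h | h
            · exact n36 h
            · exact n38 h
          · intro hA
            rcases nb_b2 a₂ hA with h | h
            · exact n46 h
            · exact n48 h
      · have heM := hM0sub he
        have hene : e ≠ s(u, v) := Finset.ne_of_mem_erase he
        refine ⟨?_, ?_, ?_, ?_⟩
        · rintro rfl; exact unt_a1 e heM hw
        · intro hA
          rcases nb_a1 w hA.symm with rfl | rfl
          · exact unt_u e heM hene hw
          · exact unt_a2 e heM hw
        · rintro rfl; exact unt_a2 e heM hw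
        · intro hA
          rcases nb_a2 w hA.symm with rfl | rfl
          · exact unt_a1 e heM hw
          · exact unt_a3 e heM hw
    have him2 := im_insert him1 adj_a1a2 hsep2
    have h1 : s(b₁, b₂) ∉ M.erase s(u, v) := fun h => unt_b1 _ (hM0sub h) (by simp)
    have h2 : s(a₁, a₂) ∉ insert s(b₁, b₂) (M.erase s(u, v)) := by
      intro h
      rcases Finset.mem_insert.1 h with h | h
      · rcases Sym2.eq_iff.1 h with ⟨h', _⟩ | ⟨h', _⟩
        · exact n36 h'
        · exact n37 h'
      · exact unt_a1 _ (hM0sub h) (by simp)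
    have hcard := hmax _ him2
    rw [Finset.card_insert_of_notMem h2, Finset.card_insert_of_notMem h1,
      Finset.card_erase_of_mem huv] at hcard
    have hpos : 1 ≤ M.card := Finset.card_pos.2 ⟨_, huv⟩
    omega
  -- at most one of u, v touched
  have htouch : ¬ ((∃ e ∈ M, u ∈ e) ∧ (∃ e ∈ M, v ∈ e)) := by
    rintro ⟨⟨e₁, he₁, hu⟩, ⟨e₂, he₂, hv⟩⟩
    by_cases hne : e₁ = e₂
    · subst hne
      have : e₁ = s(u, v) := (Sym2.mem_and_mem_iff n12).1 ⟨hu, hv⟩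
      exact huvM (this ▸ he₁)
    · exact bad e₁ he₁ e₂ he₂ hne u v hu hv adj_uv
  refine ⟨?_, htouch⟩
  -- the two halves
  have cardA : (M ∩ ({s(u, a₁), s(a₁, a₂), s(a₂, a₃), s(a₃, v)} : Finset (Sym2 V))).card ≤ 1 := by
    rw [Finset.card_le_one]
    intro e₁ h₁ e₂ h₂
    by_contra hne
    obtain ⟨he₁M, he₁A⟩ := Finset.mem_inter.1 h₁
    obtain ⟨he₂M, he₂A⟩ := Finset.mem_inter.1 h₂
    simp only [Finset.mem_insert, Finset.mem_singleton] at he₁A he₂A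
    rcases he₁A with rfl | rfl | rfl | rfl <;> rcases he₂A with rfl | rfl | rfl | rfl <;>
      first
        | exact hne rfl
        | exact bad2 _ he₁M _ he₂M hne _ (Sym2.mem_mk_left _ _) (Sym2.mem_mk_left _ _)
        | exact bad2 _ he₁M _ he₂M hne _ (Sym2.mem_mk_left _ _) (Sym2.mem_mk_right _ _)
        | exact bad2 _ he₁M _ he₂M hne _ (Sym2.mem_mk_right _ _) (Sym2.mem_mk_left _ _)
        | exact bad2 _ he₁M _ he₂M hne _ (Sym2.mem_mk_right _ _) (Sym2.mem_mk_right _ _)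
        | exact bad _ he₁M _ he₂M hne _ _ (Sym2.mem_mk_left _ _) (Sym2.mem_mk_left _ _) adj_uv
        | exact bad _ he₁M _ he₂M hne _ _ (Sym2.mem_mk_left _ _) (Sym2.mem_mk_right _ _) adj_uv
        | exact bad _ he₁M _ he₂M hne _ _ (Sym2.mem_mk_right _ _) (Sym2.mem_mk_left _ _) adj_uv
        | exact bad _ he₁M _ he₂M hne _ _ (Sym2.mem_mk_right _ _) (Sym2.mem_mk_right _ _) adj_uv
        | exact bad _ he₁M _ he₂M hne _ _ (Sym2.mem_mk_left _ _) (Sym2.mem_mk_left _ _) adj_uv.symm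
        | exact bad _ he₁M _ he₂M hne _ _ (Sym2.mem_mk_left _ _) (Sym2.mem_mk_right _ _) adj_uv.symm
        | exact bad _ he₁M _ he₂M hne _ _ (Sym2.mem_mk_right _ _) (Sym2.mem_mk_left _ _) adj_uv.symm
        | exact bad _ he₁M _ he₂M hne _ _ (Sym2.mem_mk_right _ _) (Sym2.mem_mk_right _ _) adj_uv.symm
        | exact bad _ he₁M _ he₂M hne _ _ (Sym2.mem_mk_left _ _) (Sym2.mem_mk_left _ _) adj_a1a2
        | exact bad _ he₁M _ he₂M hne _ _ (Sym2.mem_mk_left _ _) (Sym2.mem_mk_right _ _) adj_a1a2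
        | exact bad _ he₁M _ he₂M hne _ _ (Sym2.mem_mk_right _ _) (Sym2.mem_mk_left _ _) adj_a1a2
        | exact bad _ he₁M _ he₂M hne _ _ (Sym2.mem_mk_right _ _) (Sym2.mem_mk_right _ _) adj_a1a2
        | exact bad _ he₁M _ he₂M hne _ _ (Sym2.mem_mk_left _ _) (Sym2.mem_mk_left _ _) adj_a1a2.symm
        | exact bad _ he₁M _ he₂M hne _ _ (Sym2.mem_mk_left _ _) (Sym2.mem_mk_right _ _) adj_a1a2.symm
        | exact bad _ he₁M _ he₂M hne _ _ (Sym2.mem_mk_right _ _) (Sym2.mem_mk_left _ _) adj_a1a2.symm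
        | exact bad _ he₁M _ he₂M hne _ _ (Sym2.mem_mk_right _ _) (Sym2.mem_mk_right _ _) adj_a1a2.symm
        | exact bad _ he₁M _ he₂M hne _ _ (Sym2.mem_mk_left _ _) (Sym2.mem_mk_left _ _) adj_a2a3
        | exact bad _ he₁M _ he₂M hne _ _ (Sym2.mem_mk_left _ _) (Sym2.mem_mk_right _ _) adj_a2a3
        | exact bad _ he₁M _ he₂M hne _ _ (Sym2.mem_mk_right _ _) (Sym2.mem_mk_left _ _) adj_a2a3
        | exact bad _ he₁M _ he₂M hne _ _ (Sym2.mem_mk_right _ _) (Sym2.mem_mk_right _ _) adj_a2a3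
        | exact bad _ he₁M _ he₂M hne _ _ (Sym2.mem_mk_left _ _) (Sym2.mem_mk_left _ _) adj_a2a3.symm
        | exact bad _ he₁M _ he₂M hne _ _ (Sym2.mem_mk_left _ _) (Sym2.mem_mk_right _ _) adj_a2a3.symm
        | exact bad _ he₁M _ he₂M hne _ _ (Sym2.mem_mk_right _ _) (Sym2.mem_mk_left _ _) adj_a2a3.symm
        | exact bad _ he₁M _ he₂M hne _ _ (Sym2.mem_mk_right _ _) (Sym2.mem_mk_right _ _) adj_a2a3.symm
  have cardB : (M ∩ ({s(u, b₁), s(b₁, b₂), s(b₂, b₃), s(b₃, v)} : Finset (Sym2 V))).card ≤ 1 := by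
    rw [Finset.card_le_one]
    intro e₁ h₁ e₂ h₂
    by_contra hne
    obtain ⟨he₁M, he₁A⟩ := Finset.mem_inter.1 h₁
    obtain ⟨he₂M, he₂A⟩ := Finset.mem_inter.1 h₂
    simp only [Finset.mem_insert, Finset.mem_singleton] at he₁A he₂A
    rcases he₁A with rfl | rfl | rfl | rfl <;> rcases he₂A with rfl | rfl | rfl | rfl <;>
      first
        | exact hne rfl
        | exact bad2 _ he₁M _ he₂M hne _ (Sym2.mem_mk_left _ _) (Sym2.mem_mk_left _ _)
        | exact bad2 _ he₁M _ he₂M hne _ (Sym2.mem_mk_left _ _) (Sym2.mem_mk_right _ _)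
        | exact bad2 _ he₁M _ he₂M hne _ (Sym2.mem_mk_right _ _) (Sym2.mem_mk_left _ _)
        | exact bad2 _ he₁M _ he₂M hne _ (Sym2.mem_mk_right _ _) (Sym2.mem_mk_right _ _)
        | exact bad _ he₁M _ he₂M hne _ _ (Sym2.mem_mk_left _ _) (Sym2.mem_mk_left _ _) adj_uv
        | exact bad _ he₁M _ he₂M hne _ _ (Sym2.mem_mk_left _ _) (Sym2.mem_mk_right _ _) adj_uv
        | exact bad _ he₁M _ he₂M hne _ _ (Sym2.mem_mk_right _ _) (Sym2.mem_mk_left _ _) adj_uv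
        | exact bad _ he₁M _ he₂M hne _ _ (Sym2.mem_mk_right _ _) (Sym2.mem_mk_right _ _) adj_uv
        | exact bad _ he₁M _ he₂M hne _ _ (Sym2.mem_mk_left _ _) (Sym2.mem_mk_left _ _) adj_uv.symm
        | exact bad _ he₁M _ he₂M hne _ _ (Sym2.mem_mk_left _ _) (Sym2.mem_mk_right _ _) adj_uv.symm
        | exact bad _ he₁M _ he₂M hne _ _ (Sym2.mem_mk_right _ _) (Sym2.mem_mk_left _ _) adj_uv.symm
        | exact bad _ he₁M _ he₂M hne _ _ (Sym2.mem_mk_right _ _) (Sym2.mem_mk_right _ _) adj_uv.symm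
        | exact bad _ he₁M _ he₂M hne _ _ (Sym2.mem_mk_left _ _) (Sym2.mem_mk_left _ _) adj_b1b2
        | exact bad _ he₁M _ he₂M hne _ _ (Sym2.mem_mk_left _ _) (Sym2.mem_mk_right _ _) adj_b1b2
        | exact bad _ he₁M _ he₂M hne _ _ (Sym2.mem_mk_right _ _) (Sym2.mem_mk_left _ _) adj_b1b2
        | exact bad _ he₁M _ he₂M hne _ _ (Sym2.mem_mk_right _ _) (Sym2.mem_mk_right _ _) adj_b1b2
        | exact bad _ he₁M _ he₂M hne _ _ (Sym2.mem_mk_left _ _) (Sym2.mem_mk_left _ _) adj_b1b2.symm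
        | exact bad _ he₁M _ he₂M hne _ _ (Sym2.mem_mk_left _ _) (Sym2.mem_mk_right _ _) adj_b1b2.symm
        | exact bad _ he₁M _ he₂M hne _ _ (Sym2.mem_mk_right _ _) (Sym2.mem_mk_left _ _) adj_b1b2.symm
        | exact bad _ he₁M _ he₂M hne _ _ (Sym2.mem_mk_right _ _) (Sym2.mem_mk_right _ _) adj_b1b2.symm
        | exact bad _ he₁M _ he₂M hne _ _ (Sym2.mem_mk_left _ _) (Sym2.mem_mk_left _ _) adj_b2b3
        | exact bad _ he₁M _ he₂M hne _ _ (Sym2.mem_mk_left _ _) (Sym2.mem_mk_right _ _) adj_b2b3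
        | exact bad _ he₁M _ he₂M hne _ _ (Sym2.mem_mk_right _ _) (Sym2.mem_mk_left _ _) adj_b2b3
        | exact bad _ he₁M _ he₂M hne _ _ (Sym2.mem_mk_right _ _) (Sym2.mem_mk_right _ _) adj_b2b3
        | exact bad _ he₁M _ he₂M hne _ _ (Sym2.mem_mk_left _ _) (Sym2.mem_mk_left _ _) adj_b2b3.symm
        | exact bad _ he₁M _ he₂M hne _ _ (Sym2.mem_mk_left _ _) (Sym2.mem_mk_right _ _) adj_b2b3.symm
        | exact bad _ he₁M _ he₂M hne _ _ (Sym2.mem_mk_right _ _) (Sym2.mem_mk_left _ _) adj_b2b3.symm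
        | exact bad _ he₁M _ he₂M hne _ _ (Sym2.mem_mk_right _ _) (Sym2.mem_mk_right _ _) adj_b2b3.symm
  have neA : ∃ e ∈ M, e ∈ ({s(u, a₁), s(a₁, a₂), s(a₂, a₃), s(a₃, v)} : Finset (Sym2 V)) := by
    by_contra hA0
    push_neg at hA0
    have u1 : ∀ e ∈ M, a₁ ∉ e := by
      intro e he hm
      rcases edge_a1 e he hm with rfl | rfl
      · exact hA0 _ he (by simp)
      · exact hA0 _ he (by simp)
    have u2 : ∀ e ∈ M, a₂ ∉ e := by
      intro e he hm
      rcases edge_a2 e he hm with rfl | rfl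
      · exact hA0 _ he (by simp)
      · exact hA0 _ he (by simp)
    have u3 : ∀ e ∈ M, a₃ ∉ e := by
      intro e he hm
      rcases edge_a3 e he hm with rfl | rfl
      · exact hA0 _ he (by simp)
      · exact hA0 _ he (by simp)
    by_cases htu : ∃ e ∈ M, u ∈ e
    · have htv : ∀ e ∈ M, v ∉ e := fun e he hm => htouch ⟨htu, ⟨e, he, hm⟩⟩
      have hsep : ∀ e ∈ M, ∀ w ∈ e, w ≠ a₂ ∧ ¬ G.Adj w a₂ ∧ w ≠ a₃ ∧ ¬ G.Adj w a₃ := by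
        intro e he w hw
        refine ⟨fun h => u2 e he (h ▸ hw), ?_, fun h => u3 e he (h ▸ hw), ?_⟩
        · intro hA
          rcases nb_a2 w hA.symm with rfl | rfl
          · exact u1 e he hw
          · exact u3 e he hw
        · intro hA
          rcases nb_a3 w hA.symm with rfl | rfl
          · exact u2 e he hw
          · exact htv e he hw
      have him := im_insert hM adj_a2a3 hsep
      have hnotin : s(a₂, a₃) ∉ M := fun h => u2 _ h (by simp)
      have := hmax _ him
      rw [Finset.card_insert_of_notMem hnotin] at this
      omega
    · push_neg at htu
      have hsep : ∀ e ∈ M, ∀ w ∈ e, w ≠ a₁ ∧ ¬ G.Adj w a₁ ∧ w ≠ a₂ ∧ ¬ G.Adj w a₂ := by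
        intro e he w hw
        refine ⟨fun h => u1 e he (h ▸ hw), ?_, fun h => u2 e he (h ▸ hw), ?_⟩
        · intro hA
          rcases nb_a1 w hA.symm with rfl | rfl
          · exact htu e he hw
          · exact u2 e he hw
        · intro hA
          rcases nb_a2 w hA.symm with rfl | rfl
          · exact u1 e he hw
          · exact u3 e he hw
      have him := im_insert hM adj_a1a2 hsep
      have hnotin : s(a₁, a₂) ∉ M := fun h => u1 _ h (by simp)
      have := hmax _ him
      rw [Finset.card_insert_of_notMem hnotin] at this
      omega
  have neB : ∃ e ∈ M, e ∈ ({s(u, b₁), s(b₁, b₂), s(b₂, b₃), s(b₃, v)} : Finset (Sym2 V)) := by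
    by_contra hB0
    push_neg at hB0
    have u1 : ∀ e ∈ M, b₁ ∉ e := by
      intro e he hm
      rcases edge_b1 e he hm with rfl | rfl
      · exact hB0 _ he (by simp)
      · exact hB0 _ he (by simp)
    have u2 : ∀ e ∈ M, b₂ ∉ e := by
      intro e he hm
      rcases edge_b2 e he hm with rfl | rfl
      · exact hB0 _ he (by simp)
      · exact hB0 _ he (by simp)
    have u3 : ∀ e ∈ M, b₃ ∉ e := by
      intro e he hm
      rcases edge_b3 e he hm with rfl | rfl
      · exact hB0 _ he (by simp)
      · exact hB0 _ he (by simp)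
    by_cases htu : ∃ e ∈ M, u ∈ e
    · have htv : ∀ e ∈ M, v ∉ e := fun e he hm => htouch ⟨htu, ⟨e, he, hm⟩⟩
      have hsep : ∀ e ∈ M, ∀ w ∈ e, w ≠ b₂ ∧ ¬ G.Adj w b₂ ∧ w ≠ b₃ ∧ ¬ G.Adj w b₃ := by
        intro e he w hw
        refine ⟨fun h => u2 e he (h ▸ hw), ?_, fun h => u3 e he (h ▸ hw), ?_⟩
        · intro hA
          rcases nb_b2 w hA.symm with rfl | rfl
          · exact u1 e he hw
          · exact u3 e he hw
        · intro hA
          rcases nb_b3 w hA.symm with rfl | rfl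
          · exact u2 e he hw
          · exact htv e he hw
      have him := im_insert hM adj_b2b3 hsep
      have hnotin : s(b₂, b₃) ∉ M := fun h => u2 _ h (by simp)
      have := hmax _ him
      rw [Finset.card_insert_of_notMem hnotin] at this
      omega
    · push_neg at htu
      have hsep : ∀ e ∈ M, ∀ w ∈ e, w ≠ b₁ ∧ ¬ G.Adj w b₁ ∧ w ≠ b₂ ∧ ¬ G.Adj w b₂ := by
        intro e he w hw
        refine ⟨fun h => u1 e he (h ▸ hw), ?_, fun h => u2 e he (h ▸ hw), ?_⟩
        · intro hA
          rcases nb_b1 w hA.symm with rfl | rfl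
          · exact htu e he hw
          · exact u2 e he hw
        · intro hA
          rcases nb_b2 w hA.symm with rfl | rfl
          · exact u1 e he hw
          · exact u3 e he hw
      have him := im_insert hM adj_b1b2 hsep
      have hnotin : s(b₁, b₂) ∉ M := fun h => u1 _ h (by simp)
      have := hmax _ him
      rw [Finset.card_insert_of_notMem hnotin] at this
      omega
  obtain ⟨eA, heAM, heAA⟩ := neA
  obtain ⟨eB, heBM, heBB⟩ := neB
  have hMA : (M ∩ ({s(u, a₁), s(a₁, a₂), s(a₂, a₃), s(a₃, v)} : Finset (Sym2 V))).card = 1 :=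
    le_antisymm cardA (Finset.card_pos.2 ⟨eA, Finset.mem_inter.2 ⟨heAM, heAA⟩⟩)
  have hMB : (M ∩ ({s(u, b₁), s(b₁, b₂), s(b₂, b₃), s(b₃, v)} : Finset (Sym2 V))).card = 1 :=
    le_antisymm cardB (Finset.card_pos.2 ⟨eB, Finset.mem_inter.2 ⟨heBM, heBB⟩⟩)
  have hsplit : M ∩ E9 =
      (M ∩ ({s(u, a₁), s(a₁, a₂), s(a₂, a₃), s(a₃, v)} : Finset (Sym2 V))) ∪
      (M ∩ ({s(u, b₁), s(b₁, b₂), s(b₂, b₃), s(b₃, v)} : Finset (Sym2 V))) := by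
    rw [← Finset.inter_union_distrib_left]
    ext e
    simp only [hE9, Finset.mem_inter, Finset.mem_union, Finset.mem_insert, Finset.mem_singleton]
    constructor
    · rintro ⟨heM, h⟩
      refine ⟨heM, ?_⟩
      rcases h with rfl | h | h | h | h | h | h | h | h
      · exact absurd heM huvM
      · exact Or.inl (Or.inl h)
      · exact Or.inl (Or.inr (Or.inl h))
      · exact Or.inl (Or.inr (Or.inr (Or.inl h)))
      · exact Or.inl (Or.inr (Or.inr (Or.inr h)))
      · exact Or.inr (Or.inl h)
      · exact Or.inr (Or.inr (Or.inl h))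
      · exact Or.inr (Or.inr (Or.inr (Or.inl h)))
      · exact Or.inr (Or.inr (Or.inr (Or.inr h)))
    · rintro ⟨heM, h⟩
      refine ⟨heM, Or.inr ?_⟩
      rcases h with (h | h | h | h) | (h | h | h | h)
      · exact Or.inl h
      · exact Or.inr (Or.inl h)
      · exact Or.inr (Or.inr (Or.inl h))
      · exact Or.inr (Or.inr (Or.inr (Or.inl h)))
      · exact Or.inr (Or.inr (Or.inr (Or.inr (Or.inl h))))
      · exact Or.inr (Or.inr (Or.inr (Or.inr (Or.inr (Or.inl h)))))
      · exact Or.inr (Or.inr (Or.inr (Or.inr (Or.inr (Or.inr (Or.inl h))))))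
      · exact Or.inr (Or.inr (Or.inr (Or.inr (Or.inr (Or.inr (Or.inr h))))))
  have hdisj : Disjoint
      (M ∩ ({s(u, a₁), s(a₁, a₂), s(a₂, a₃), s(a₃, v)} : Finset (Sym2 V)))
      (M ∩ ({s(u, b₁), s(b₁, b₂), s(b₂, b₃), s(b₃, v)} : Finset (Sym2 V))) := by
    rw [Finset.disjoint_left]
    intro e heA heB
    obtain ⟨-, hA'⟩ := Finset.mem_inter.1 heA
    obtain ⟨-, hB'⟩ := Finset.mem_inter.1 heB
    simp only [Finset.mem_insert, Finset.mem_singleton] at hA' hB'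
    rcases hA' with rfl | rfl | rfl | rfl <;>
      simp only [Sym2.eq_iff, n12,n13,n14,n15,n16,n17,n18,n23,n24,n25,n26,n27,n28,n34,n35,n36,n37,n38,n45,n46,n47,n48,n56,n57,n58,n67,n68,n78,Ne.symm n12,Ne.symm n13,Ne.symm n14,Ne.symm n15,Ne.symm n16,Ne.symm n17,Ne.symm n18,Ne.symm n23,Ne.symm n24,Ne.symm n25,Ne.symm n26,Ne.symm n27,Ne.symm n28,Ne.symm n34,Ne.symm n35,Ne.symm n36,Ne.symm n37,Ne.symm n38,Ne.symm n45,Ne.symm n46,Ne.symm n47,Ne.symm n48,Ne.symm n56,Ne.symm n57,Ne.symm n58,Ne.symm n67,Ne.symm n68,Ne.symm n78,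
        false_and, and_false, false_or, or_false, or_self, not_false_eq_true] at hB'
  rw [hsplit, Finset.card_union_of_disjoint hdisj, hMA, hMB]
end

section
/- Let G be a finite simple graph containing a connection gadget on the eight distinct vertices u₁, u₂, a₁, a₂, b₁, b₂, v₁, v₂, and let T be a partition of G into triangles. Then u₁ is blocked with respect to T if and only if v₁ is free with respect to T, and u₂ is blocked with respect to T if and only if v₂ is free with respect to T. -/
set_option maxHeartbeats 1000000 in
/-- For a connection gadget on the eight distinct vertices
`u₁, u₂, a₁, a₂, b₁, b₂, v₁, v₂` in a finite graph `G` and a partition `T` of `G`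
into triangles: `u₁` is blocked (its triangle lies inside the gadget) iff `v₁` is
free, and `u₂` is blocked iff `v₂` is free. -/
theorem connection_gadget_state {V : Type*} [Fintype V] [DecidableEq V]
    (G : SimpleGraph V) (u₁ u₂ a₁ a₂ b₁ b₂ v₁ v₂ : V)
    (hdist : ([u₁, u₂, a₁, a₂, b₁, b₂, v₁, v₂] : List V).Nodup)
    (S : Finset V) (hS : S = {u₁, u₂, a₁, a₂, b₁, b₂, v₁, v₂})
    (E13 : Finset (Sym2 V))
    (hE13 : E13 = {s(u₁, u₂), s(a₁, a₂), s(b₁, b₂), s(v₁, v₂),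
                   s(u₁, a₁), s(u₂, a₂), s(u₁, a₂),
                   s(a₁, b₁), s(a₂, b₂), s(a₁, b₂),
                   s(b₁, v₁), s(b₂, v₂), s(b₁, v₂)})
    (hGadgetEdges : ∀ x ∈ S, ∀ y ∈ S, (G.Adj x y ↔ s(x, y) ∈ E13))
    (hInternal : ∀ x ∈ ({a₁, a₂, b₁, b₂} : Finset V), ∀ y, G.Adj x y → y ∈ S)
    (T : Finset (Finset V))
    (hTtri : ∀ t ∈ T, t.card = 3 ∧ ∀ x ∈ t, ∀ y ∈ t, x ≠ y → G.Adj x y)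
    (hTpart : ∀ x : V, ∃! t, t ∈ T ∧ x ∈ t) :
    ((∃ t ∈ T, u₁ ∈ t ∧ t ⊆ S) ↔ ¬ (∃ t ∈ T, v₁ ∈ t ∧ t ⊆ S)) ∧
    ((∃ t ∈ T, u₂ ∈ t ∧ t ⊆ S) ↔ ¬ (∃ t ∈ T, v₂ ∈ t ∧ t ⊆ S)) := by
  simp only [List.nodup_cons, List.mem_cons, List.not_mem_nil, or_false, List.nodup_nil,
    and_true, not_or, List.mem_singleton] at hdist
  obtain ⟨⟨d1,d2,d3,d4,d5,d6,d7⟩,⟨d8,d9,d10,d11,d12,d13⟩,⟨d14,d15,d16,d17,d18⟩,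
    ⟨d19,d20,d21,d22⟩,⟨d23,d24,d25⟩,⟨d26,d27⟩,d28,-⟩ := hdist
  have ne_u1_u2 : u₁ ≠ u₂ := d1
  have ne_u2_u1 : u₂ ≠ u₁ := fun h => d1 h.symm
  have ne_u1_a1 : u₁ ≠ a₁ := d2
  have ne_a1_u1 : a₁ ≠ u₁ := fun h => d2 h.symm
  have ne_u1_a2 : u₁ ≠ a₂ := d3
  have ne_a2_u1 : a₂ ≠ u₁ := fun h => d3 h.symm
  have ne_u1_b1 : u₁ ≠ b₁ := d4
  have ne_b1_u1 : b₁ ≠ u₁ := fun h => d4 h.symm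
  have ne_u1_b2 : u₁ ≠ b₂ := d5
  have ne_b2_u1 : b₂ ≠ u₁ := fun h => d5 h.symm
  have ne_u1_v1 : u₁ ≠ v₁ := d6
  have ne_v1_u1 : v₁ ≠ u₁ := fun h => d6 h.symm
  have ne_u1_v2 : u₁ ≠ v₂ := d7
  have ne_v2_u1 : v₂ ≠ u₁ := fun h => d7 h.symm
  have ne_u2_a1 : u₂ ≠ a₁ := d8
  have ne_a1_u2 : a₁ ≠ u₂ := fun h => d8 h.symm
  have ne_u2_a2 : u₂ ≠ a₂ := d9
  have ne_a2_u2 : a₂ ≠ u₂ := fun h => d9 h.symm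
  have ne_u2_b1 : u₂ ≠ b₁ := d10
  have ne_b1_u2 : b₁ ≠ u₂ := fun h => d10 h.symm
  have ne_u2_b2 : u₂ ≠ b₂ := d11
  have ne_b2_u2 : b₂ ≠ u₂ := fun h => d11 h.symm
  have ne_u2_v1 : u₂ ≠ v₁ := d12
  have ne_v1_u2 : v₁ ≠ u₂ := fun h => d12 h.symm
  have ne_u2_v2 : u₂ ≠ v₂ := d13
  have ne_v2_u2 : v₂ ≠ u₂ := fun h => d13 h.symm
  have ne_a1_a2 : a₁ ≠ a₂ := d14
  have ne_a2_a1 : a₂ ≠ a₁ := fun h => d14 h.symm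
  have ne_a1_b1 : a₁ ≠ b₁ := d15
  have ne_b1_a1 : b₁ ≠ a₁ := fun h => d15 h.symm
  have ne_a1_b2 : a₁ ≠ b₂ := d16
  have ne_b2_a1 : b₂ ≠ a₁ := fun h => d16 h.symm
  have ne_a1_v1 : a₁ ≠ v₁ := d17
  have ne_v1_a1 : v₁ ≠ a₁ := fun h => d17 h.symm
  have ne_a1_v2 : a₁ ≠ v₂ := d18
  have ne_v2_a1 : v₂ ≠ a₁ := fun h => d18 h.symm
  have ne_a2_b1 : a₂ ≠ b₁ := d19
  have ne_b1_a2 : b₁ ≠ a₂ := fun h => d19 h.symm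
  have ne_a2_b2 : a₂ ≠ b₂ := d20
  have ne_b2_a2 : b₂ ≠ a₂ := fun h => d20 h.symm
  have ne_a2_v1 : a₂ ≠ v₁ := d21
  have ne_v1_a2 : v₁ ≠ a₂ := fun h => d21 h.symm
  have ne_a2_v2 : a₂ ≠ v₂ := d22
  have ne_v2_a2 : v₂ ≠ a₂ := fun h => d22 h.symm
  have ne_b1_b2 : b₁ ≠ b₂ := d23
  have ne_b2_b1 : b₂ ≠ b₁ := fun h => d23 h.symm
  have ne_b1_v1 : b₁ ≠ v₁ := d24
  have ne_v1_b1 : v₁ ≠ b₁ := fun h => d24 h.symm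
  have ne_b1_v2 : b₁ ≠ v₂ := d25
  have ne_v2_b1 : v₂ ≠ b₁ := fun h => d25 h.symm
  have ne_b2_v1 : b₂ ≠ v₁ := d26
  have ne_v1_b2 : v₁ ≠ b₂ := fun h => d26 h.symm
  have ne_b2_v2 : b₂ ≠ v₂ := d27
  have ne_v2_b2 : v₂ ≠ b₂ := fun h => d27 h.symm
  have ne_v1_v2 : v₁ ≠ v₂ := d28
  have ne_v2_v1 : v₂ ≠ v₁ := fun h => d28 h.symm
  have hu₁S : u₁ ∈ S := by simp [hS]
  have hu₂S : u₂ ∈ S := by simp [hS]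
  have ha₁S : a₁ ∈ S := by simp [hS]
  have ha₂S : a₂ ∈ S := by simp [hS]
  have hb₁S : b₁ ∈ S := by simp [hS]
  have hb₂S : b₂ ∈ S := by simp [hS]
  have hv₁S : v₁ ∈ S := by simp [hS]
  have hv₂S : v₂ ∈ S := by simp [hS]
  -- neighbor restriction lemmas
  have Na₁ : ∀ y, G.Adj a₁ y → y = u₁ ∨ y = a₂ ∨ y = b₁ ∨ y = b₂ := by
    intro y hy
    have hyS : y ∈ S := hInternal a₁ (by simp) y hy
    have hmem : s(a₁, y) ∈ E13 := (hGadgetEdges a₁ ha₁S y hyS).mp hy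
    rw [hE13] at hmem
    simp only [Finset.mem_insert, Finset.mem_singleton, Sym2.eq, Sym2.rel_iff',
      Prod.mk.injEq, Prod.swap_prod_mk, ne_u1_u2, ne_u1_a1, ne_u1_a2, ne_u1_b1, ne_u1_b2, ne_u1_v1, ne_u1_v2, ne_u2_u1, ne_u2_a1, ne_u2_a2, ne_u2_b1, ne_u2_b2, ne_u2_v1, ne_u2_v2, ne_a1_u1, ne_a1_u2, ne_a1_a2, ne_a1_b1, ne_a1_b2, ne_a1_v1, ne_a1_v2, ne_a2_u1, ne_a2_u2, ne_a2_a1, ne_a2_b1, ne_a2_b2, ne_a2_v1, ne_a2_v2, ne_b1_u1, ne_b1_u2, ne_b1_a1, ne_b1_a2, ne_b1_b2, ne_b1_v1, ne_b1_v2, ne_b2_u1, ne_b2_u2, ne_b2_a1, ne_b2_a2, ne_b2_b1, ne_b2_v1, ne_b2_v2, ne_v1_u1, ne_v1_u2, ne_v1_a1, ne_v1_a2, ne_v1_b1, ne_v1_b2, ne_v1_v2, ne_v2_u1, ne_v2_u2, ne_v2_a1, ne_v2_a2, ne_v2_b1, ne_v2_b2, ne_v2_v1,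
      false_and, and_false, false_or, or_false, true_and, and_true] at hmem
    tauto
  have Na₂ : ∀ y, G.Adj a₂ y → y = a₁ ∨ y = u₂ ∨ y = u₁ ∨ y = b₂ := by
    intro y hy
    have hyS : y ∈ S := hInternal a₂ (by simp) y hy
    have hmem : s(a₂, y) ∈ E13 := (hGadgetEdges a₂ ha₂S y hyS).mp hy
    rw [hE13] at hmem
    simp only [Finset.mem_insert, Finset.mem_singleton, Sym2.eq, Sym2.rel_iff',
      Prod.mk.injEq, Prod.swap_prod_mk, ne_u1_u2, ne_u1_a1, ne_u1_a2, ne_u1_b1, ne_u1_b2, ne_u1_v1, ne_u1_v2, ne_u2_u1, ne_u2_a1, ne_u2_a2, ne_u2_b1, ne_u2_b2, ne_u2_v1, ne_u2_v2, ne_a1_u1, ne_a1_u2, ne_a1_a2, ne_a1_b1, ne_a1_b2, ne_a1_v1, ne_a1_v2, ne_a2_u1, ne_a2_u2, ne_a2_a1, ne_a2_b1, ne_a2_b2, ne_a2_v1, ne_a2_v2, ne_b1_u1, ne_b1_u2, ne_b1_a1, ne_b1_a2, ne_b1_b2, ne_b1_v1, ne_b1_v2, ne_b2_u1, ne_b2_u2,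 ne_b2_a1, ne_b2_a2, ne_b2_b1, ne_b2_v1, ne_b2_v2, ne_v1_u1, ne_v1_u2, ne_v1_a1, ne_v1_a2, ne_v1_b1, ne_v1_b2, ne_v1_v2, ne_v2_u1, ne_v2_u2, ne_v2_a1, ne_v2_a2, ne_v2_b1, ne_v2_b2, ne_v2_v1,
      false_and, and_false, false_or, or_false, true_and, and_true] at hmem
    tauto
  have Nb₁ : ∀ y, G.Adj b₁ y → y = b₂ ∨ y = v₁ ∨ y = a₁ ∨ y = v₂ := by
    intro y hy
    have hyS : y ∈ S := hInternal b₁ (by simp) y hy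
    have hmem : s(b₁, y) ∈ E13 := (hGadgetEdges b₁ hb₁S y hyS).mp hy
    rw [hE13] at hmem
    simp only [Finset.mem_insert, Finset.mem_singleton, Sym2.eq, Sym2.rel_iff',
      Prod.mk.injEq, Prod.swap_prod_mk, ne_u1_u2, ne_u1_a1, ne_u1_a2, ne_u1_b1, ne_u1_b2, ne_u1_v1, ne_u1_v2, ne_u2_u1, ne_u2_a1, ne_u2_a2, ne_u2_b1, ne_u2_b2, ne_u2_v1, ne_u2_v2, ne_a1_u1, ne_a1_u2, ne_a1_a2, ne_a1_b1, ne_a1_b2, ne_a1_v1, ne_a1_v2, ne_a2_u1, ne_a2_u2, ne_a2_a1, ne_a2_b1, ne_a2_b2, ne_a2_v1, ne_a2_v2, ne_b1_u1, ne_b1_u2, ne_b1_a1, ne_b1_a2, ne_b1_b2, ne_b1_v1, ne_b1_v2, ne_b2_u1, ne_b2_u2, ne_b2_a1, ne_b2_a2, ne_b2_b1, ne_b2_v1, ne_b2_v2, ne_v1_u1, ne_v1_u2, ne_v1_a1, ne_v1_a2, ne_v1_b1, ne_v1_b2, ne_v1_v2, ne_v2_u1, ne_v2_u2, ne_v2_a1,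 ne_v2_a2, ne_v2_b1, ne_v2_b2, ne_v2_v1,
      false_and, and_false, false_or, or_false, true_and, and_true] at hmem
    tauto
  have Nb₂ : ∀ y, G.Adj b₂ y → y = b₁ ∨ y = a₂ ∨ y = a₁ ∨ y = v₂ := by
    intro y hy
    have hyS : y ∈ S := hInternal b₂ (by simp) y hy
    have hmem : s(b₂, y) ∈ E13 := (hGadgetEdges b₂ hb₂S y hyS).mp hy
    rw [hE13] at hmem
    simp only [Finset.mem_insert, Finset.mem_singleton, Sym2.eq, Sym2.rel_iff',
      Prod.mk.injEq, Prod.swap_prod_mk, ne_u1_u2, ne_u1_a1, ne_u1_a2, ne_u1_b1, ne_u1_b2, ne_u1_v1, ne_u1_v2, ne_u2_u1, ne_u2_a1, ne_u2_a2, ne_u2_b1, ne_u2_b2, ne_u2_v1, ne_u2_v2, ne_a1_u1, ne_a1_u2, ne_a1_a2, ne_a1_b1, ne_a1_b2, ne_a1_v1, ne_a1_v2, ne_a2_u1, ne_a2_u2, ne_a2_a1, ne_a2_b1, ne_a2_b2, ne_a2_v1, ne_a2_v2, ne_b1_u1, ne_b1_u2, ne_b1_a1, ne_b1_a2, ne_b1_b2,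 ne_b1_v1, ne_b1_v2, ne_b2_u1, ne_b2_u2, ne_b2_a1, ne_b2_a2, ne_b2_b1, ne_b2_v1, ne_b2_v2, ne_v1_u1, ne_v1_u2, ne_v1_a1, ne_v1_a2, ne_v1_b1, ne_v1_b2, ne_v1_v2, ne_v2_u1, ne_v2_u2, ne_v2_a1, ne_v2_a2, ne_v2_b1, ne_v2_b2, ne_v2_v1,
      false_and, and_false, false_or, or_false, true_and, and_true] at hmem
    tauto
  have Nu₁ : ∀ y ∈ S, G.Adj u₁ y → y = u₂ ∨ y = a₁ ∨ y = a₂ := by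
    intro y hyS hy
    have hmem : s(u₁, y) ∈ E13 := (hGadgetEdges u₁ hu₁S y hyS).mp hy
    rw [hE13] at hmem
    simp only [Finset.mem_insert, Finset.mem_singleton, Sym2.eq, Sym2.rel_iff',
      Prod.mk.injEq, Prod.swap_prod_mk, ne_u1_u2, ne_u1_a1, ne_u1_a2, ne_u1_b1, ne_u1_b2, ne_u1_v1, ne_u1_v2, ne_u2_u1, ne_u2_a1, ne_u2_a2, ne_u2_b1, ne_u2_b2, ne_u2_v1, ne_u2_v2, ne_a1_u1, ne_a1_u2, ne_a1_a2, ne_a1_b1, ne_a1_b2, ne_a1_v1, ne_a1_v2, ne_a2_u1, ne_a2_u2, ne_a2_a1, ne_a2_b1, ne_a2_b2, ne_a2_v1, ne_a2_v2, ne_b1_u1, ne_b1_u2, ne_b1_a1, ne_b1_a2, ne_b1_b2, ne_b1_v1, ne_b1_v2, ne_b2_u1, ne_b2_u2, ne_b2_a1, ne_b2_a2, ne_b2_b1, ne_b2_v1, ne_b2_v2, ne_v1_u1, ne_v1_u2, ne_v1_a1, ne_v1_a2, ne_v1_b1, ne_v1_b2, ne_v1_v2, ne_v2_u1, ne_v2_u2,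 ne_v2_a1, ne_v2_a2, ne_v2_b1, ne_v2_b2, ne_v2_v1,
      false_and, and_false, false_or, or_false, true_and, and_true] at hmem
    tauto
  have Nu₂ : ∀ y ∈ S, G.Adj u₂ y → y = u₁ ∨ y = a₂ := by
    intro y hyS hy
    have hmem : s(u₂, y) ∈ E13 := (hGadgetEdges u₂ hu₂S y hyS).mp hy
    rw [hE13] at hmem
    simp only [Finset.mem_insert, Finset.mem_singleton, Sym2.eq, Sym2.rel_iff',
      Prod.mk.injEq, Prod.swap_prod_mk, ne_u1_u2, ne_u1_a1, ne_u1_a2, ne_u1_b1, ne_u1_b2, ne_u1_v1, ne_u1_v2, ne_u2_u1, ne_u2_a1, ne_u2_a2, ne_u2_b1, ne_u2_b2, ne_u2_v1, ne_u2_v2, ne_a1_u1, ne_a1_u2, ne_a1_a2, ne_a1_b1, ne_a1_b2, ne_a1_v1, ne_a1_v2, ne_a2_u1, ne_a2_u2, ne_a2_a1, ne_a2_b1, ne_a2_b2, ne_a2_v1, ne_a2_v2, ne_b1_u1, ne_b1_u2, ne_b1_a1, ne_b1_a2, ne_b1_b2, ne_b1_v1, ne_b1_v2, ne_b2_u1,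 ne_b2_u2, ne_b2_a1, ne_b2_a2, ne_b2_b1, ne_b2_v1, ne_b2_v2, ne_v1_u1, ne_v1_u2, ne_v1_a1, ne_v1_a2, ne_v1_b1, ne_v1_b2, ne_v1_v2, ne_v2_u1, ne_v2_u2, ne_v2_a1, ne_v2_a2, ne_v2_b1, ne_v2_b2, ne_v2_v1,
      false_and, and_false, false_or, or_false, true_and, and_true] at hmem
    tauto
  have Nv₁ : ∀ y ∈ S, G.Adj v₁ y → y = v₂ ∨ y = b₁ := by
    intro y hyS hy
    have hmem : s(v₁, y) ∈ E13 := (hGadgetEdges v₁ hv₁S y hyS).mp hy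
    rw [hE13] at hmem
    simp only [Finset.mem_insert, Finset.mem_singleton, Sym2.eq, Sym2.rel_iff',
      Prod.mk.injEq, Prod.swap_prod_mk, ne_u1_u2, ne_u1_a1, ne_u1_a2, ne_u1_b1, ne_u1_b2, ne_u1_v1, ne_u1_v2, ne_u2_u1, ne_u2_a1, ne_u2_a2, ne_u2_b1, ne_u2_b2, ne_u2_v1, ne_u2_v2, ne_a1_u1, ne_a1_u2, ne_a1_a2, ne_a1_b1, ne_a1_b2, ne_a1_v1, ne_a1_v2, ne_a2_u1, ne_a2_u2, ne_a2_a1, ne_a2_b1, ne_a2_b2, ne_a2_v1, ne_a2_v2, ne_b1_u1, ne_b1_u2, ne_b1_a1, ne_b1_a2, ne_b1_b2, ne_b1_v1, ne_b1_v2, ne_b2_u1, ne_b2_u2, ne_b2_a1, ne_b2_a2, ne_b2_b1, ne_b2_v1, ne_b2_v2, ne_v1_u1, ne_v1_u2, ne_v1_a1, ne_v1_a2, ne_v1_b1, ne_v1_b2, ne_v1_v2, ne_v2_u1, ne_v2_u2, ne_v2_a1, ne_v2_a2, ne_v2_b1, ne_v2_b2, ne_v2_v1,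
      false_and, and_false, false_or, or_false, true_and, and_true] at hmem
    tauto
  have Nv₂ : ∀ y ∈ S, G.Adj v₂ y → y = v₁ ∨ y = b₂ ∨ y = b₁ := by
    intro y hyS hy
    have hmem : s(v₂, y) ∈ E13 := (hGadgetEdges v₂ hv₂S y hyS).mp hy
    rw [hE13] at hmem
    simp only [Finset.mem_insert, Finset.mem_singleton, Sym2.eq, Sym2.rel_iff',
      Prod.mk.injEq, Prod.swap_prod_mk, ne_u1_u2, ne_u1_a1, ne_u1_a2, ne_u1_b1, ne_u1_b2, ne_u1_v1, ne_u1_v2, ne_u2_u1, ne_u2_a1, ne_u2_a2, ne_u2_b1, ne_u2_b2, ne_u2_v1, ne_u2_v2, ne_a1_u1, ne_a1_u2, ne_a1_a2, ne_a1_b1, ne_a1_b2, ne_a1_v1, ne_a1_v2, ne_a2_u1, ne_a2_u2, ne_a2_a1, ne_a2_b1, ne_a2_b2, ne_a2_v1, ne_a2_v2, ne_b1_u1, ne_b1_u2, ne_b1_a1, ne_b1_a2, ne_b1_b2, ne_b1_v1, ne_b1_v2, ne_b2_u1, ne_b2_u2, ne_b2_a1, ne_b2_a2, ne_b2_b1,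 ne_b2_v1, ne_b2_v2, ne_v1_u1, ne_v1_u2, ne_v1_a1, ne_v1_a2, ne_v1_b1, ne_v1_b2, ne_v1_v2, ne_v2_u1, ne_v2_u2, ne_v2_a1, ne_v2_a2, ne_v2_b1, ne_v2_b2, ne_v2_v1,
      false_and, and_false, false_or, or_false, true_and, and_true] at hmem
    tauto
  -- triangle shape
  have shape : ∀ t ∈ T, ∀ w ∈ t, ∃ x y, x ≠ y ∧ x ≠ w ∧ y ≠ w ∧ x ∈ t ∧ y ∈ t ∧
      (∀ z ∈ t, z = w ∨ z = x ∨ z = y) ∧ G.Adj w x ∧ G.Adj w y ∧ G.Adj x y := by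
    intro t ht w hw
    obtain ⟨hcard, hadj⟩ := hTtri t ht
    have h2 : (t.erase w).card = 2 := by rw [Finset.card_erase_of_mem hw, hcard]
    obtain ⟨x, y, hxy, hexy⟩ := Finset.card_eq_two.mp h2
    have hx' : x ∈ t.erase w := by rw [hexy]; simp
    have hy' : y ∈ t.erase w := by rw [hexy]; simp
    have hx : x ∈ t := Finset.mem_of_mem_erase hx'
    have hy : y ∈ t := Finset.mem_of_mem_erase hy'
    have hxw : x ≠ w := Finset.ne_of_mem_erase hx'
    have hyw : y ≠ w := Finset.ne_of_mem_erase hy'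
    refine ⟨x, y, hxy, hxw, hyw, hx, hy, ?_, hadj w hw x hx hxw.symm,
      hadj w hw y hy hyw.symm, hadj x hx y hy hxy⟩
    intro z hz
    by_cases hzw : z = w
    · exact Or.inl hzw
    · have hz' : z ∈ t.erase w := Finset.mem_erase.mpr ⟨hzw, hz⟩
      rw [hexy] at hz'
      exact Or.inr (by simpa using hz')
  -- uniqueness of triangle through a vertex
  have uniq : ∀ t ∈ T, ∀ t' ∈ T, ∀ x, x ∈ t → x ∈ t' → t = t' := by
    intro t ht t' ht' x hx hx'
    obtain ⟨s, -, hu⟩ := hTpart x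
    rw [hu t ⟨ht, hx⟩, hu t' ⟨ht', hx'⟩]
  -- Case 1: tA = {a₁, u₁, a₂}
  have case1 : ∀ tA ∈ T, a₁ ∈ tA → u₁ ∈ tA → a₂ ∈ tA →
      (∀ z ∈ tA, z = a₁ ∨ z = u₁ ∨ z = a₂) →
      ((∃ t ∈ T, u₁ ∈ t ∧ t ⊆ S) ↔ ¬ (∃ t ∈ T, v₁ ∈ t ∧ t ⊆ S)) ∧
      ((∃ t ∈ T, u₂ ∈ t ∧ t ⊆ S) ↔ ¬ (∃ t ∈ T, v₂ ∈ t ∧ t ⊆ S)) := by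
    intro tA htA ha₁A hu₁A ha₂A hchar
    obtain ⟨tB, ⟨htB, hb₂B⟩, -⟩ := hTpart b₂
    obtain ⟨x, y, hxy, hxb, hyb, hxB, hyB, hcharB, hbx, hby, hbxy⟩ := shape tB htB b₂ hb₂B
    have hdisjA : ∀ w, w ∈ tB → w ∈ tA → False := fun w hw hw' => by
      have heq : tB = tA := uniq tB htB tA htA w hw hw'
      rcases hchar b₂ (heq ▸ hb₂B) with h|h|h
      exacts [ne_b2_a1 h, ne_b2_u1 h, ne_b2_a2 h]
    have hx' : x = b₁ ∨ x = v₂ := by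
      rcases Nb₂ x hbx with h|h|h|h
      · exact Or.inl h
      · exact absurd (hdisjA x hxB (by rw [h]; exact ha₂A)) not_false
      · exact absurd (hdisjA x hxB (by rw [h]; exact ha₁A)) not_false
      · exact Or.inr h
    have hy' : y = b₁ ∨ y = v₂ := by
      rcases Nb₂ y hby with h|h|h|h
      · exact Or.inl h
      · exact absurd (hdisjA y hyB (by rw [h]; exact ha₂A)) not_false
      · exact absurd (hdisjA y hyB (by rw [h]; exact ha₁A)) not_false
      · exact Or.inr h
    have hkey : b₁ ∈ tB ∧ v₂ ∈ tB ∧ ∀ z ∈ tB, z = b₂ ∨ z = b₁ ∨ z = v₂ := by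
      rcases hx' with h1|h1 <;> rcases hy' with h2|h2
      · exact absurd (h1.trans h2.symm) hxy
      · exact ⟨by rw [← h1]; exact hxB, by rw [← h2]; exact hyB, fun z hz => by
          rcases hcharB z hz with h|h|h
          exacts [Or.inl h, Or.inr (Or.inl (h.trans h1)), Or.inr (Or.inr (h.trans h2))]⟩
      · exact ⟨by rw [← h2]; exact hyB, by rw [← h1]; exact hxB, fun z hz => by
          rcases hcharB z hz with h|h|h
          exacts [Or.inl h, Or.inr (Or.inr (h.trans h1)), Or.inr (Or.inl (h.trans h2))]⟩
      · exact absurd (h1.trans h2.symm) hxy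
    obtain ⟨hb₁B, hv₂B, hcharB'⟩ := hkey
    have htAS : tA ⊆ S := fun z hz => by rcases hchar z hz with h|h|h <;> simp [hS, h]
    have htBS : tB ⊆ S := fun z hz => by rcases hcharB' z hz with h|h|h <;> simp [hS, h]
    have hv₁f : ¬ (∃ t ∈ T, v₁ ∈ t ∧ t ⊆ S) := by
      rintro ⟨t, ht, hvt, hts⟩
      obtain ⟨x', y', hxy', hx1, hy1, hxt, hyt, hchart, hax', hay', haxy'⟩ := shape t ht v₁ hvt
      have hteq : ∀ w, w ∈ t → w ∈ tB → False := fun w hw hw' => by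
        have heq : t = tB := uniq t ht tB htB w hw hw'
        rcases hcharB' v₁ (heq ▸ hvt) with h|h|h
        exacts [ne_v1_b2 h, ne_v1_b1 h, ne_v1_v2 h]
      rcases Nv₁ x' (hts hxt) hax' with h|h
      · exact hteq x' hxt (by rw [h]; exact hv₂B)
      · exact hteq x' hxt (by rw [h]; exact hb₁B)
    have hu₂f : ¬ (∃ t ∈ T, u₂ ∈ t ∧ t ⊆ S) := by
      rintro ⟨t, ht, hut, hts⟩
      obtain ⟨x', y', hxy', hx1, hy1, hxt, hyt, hchart, hax', hay', haxy'⟩ := shape t ht u₂ hut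
      have hteq : ∀ w, w ∈ t → w ∈ tA → False := fun w hw hw' => by
        have heq : t = tA := uniq t ht tA htA w hw hw'
        rcases hchar u₂ (heq ▸ hut) with h|h|h
        exacts [ne_u2_a1 h, ne_u2_u1 h, ne_u2_a2 h]
      rcases Nu₂ x' (hts hxt) hax' with h|h
      · exact hteq x' hxt (by rw [h]; exact hu₁A)
      · exact hteq x' hxt (by rw [h]; exact ha₂A)
    exact ⟨iff_of_true ⟨tA, htA, hu₁A, htAS⟩ hv₁f,
      iff_of_false hu₂f (not_not_intro ⟨tB, htB, hv₂B, htBS⟩)⟩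
  -- Case 2: tA = {a₁, a₂, b₂}
  have case2 : ∀ tA ∈ T, a₁ ∈ tA → a₂ ∈ tA → b₂ ∈ tA →
      (∀ z ∈ tA, z = a₁ ∨ z = a₂ ∨ z = b₂) →
      ((∃ t ∈ T, u₁ ∈ t ∧ t ⊆ S) ↔ ¬ (∃ t ∈ T, v₁ ∈ t ∧ t ⊆ S)) ∧
      ((∃ t ∈ T, u₂ ∈ t ∧ t ⊆ S) ↔ ¬ (∃ t ∈ T, v₂ ∈ t ∧ t ⊆ S)) := by
    intro tA htA ha₁A ha₂A hb₂A hchar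
    obtain ⟨tB, ⟨htB, hb₁B⟩, -⟩ := hTpart b₁
    obtain ⟨x, y, hxy, hxb, hyb, hxB, hyB, hcharB, hbx, hby, hbxy⟩ := shape tB htB b₁ hb₁B
    have hdisjA : ∀ w, w ∈ tB → w ∈ tA → False := fun w hw hw' => by
      have heq : tB = tA := uniq tB htB tA htA w hw hw'
      rcases hchar b₁ (heq ▸ hb₁B) with h|h|h
      exacts [ne_b1_a1 h, ne_b1_a2 h, ne_b1_b2 h]
    have hx' : x = v₁ ∨ x = v₂ := by
      rcases Nb₁ x hbx with h|h|h|h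
      · exact absurd (hdisjA x hxB (by rw [h]; exact hb₂A)) not_false
      · exact Or.inl h
      · exact absurd (hdisjA x hxB (by rw [h]; exact ha₁A)) not_false
      · exact Or.inr h
    have hy' : y = v₁ ∨ y = v₂ := by
      rcases Nb₁ y hby with h|h|h|h
      · exact absurd (hdisjA y hyB (by rw [h]; exact hb₂A)) not_false
      · exact Or.inl h
      · exact absurd (hdisjA y hyB (by rw [h]; exact ha₁A)) not_false
      · exact Or.inr h
    have hkey : v₁ ∈ tB ∧ v₂ ∈ tB ∧ ∀ z ∈ tB, z = b₁ ∨ z = v₁ ∨ z = v₂ := by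
      rcases hx' with h1|h1 <;> rcases hy' with h2|h2
      · exact absurd (h1.trans h2.symm) hxy
      · exact ⟨by rw [← h1]; exact hxB, by rw [← h2]; exact hyB, fun z hz => by
          rcases hcharB z hz with h|h|h
          exacts [Or.inl h, Or.inr (Or.inl (h.trans h1)), Or.inr (Or.inr (h.trans h2))]⟩
      · exact ⟨by rw [← h2]; exact hyB, by rw [← h1]; exact hxB, fun z hz => by
          rcases hcharB z hz with h|h|h
          exacts [Or.inl h, Or.inr (Or.inr (h.trans h1)), Or.inr (Or.inl (h.trans h2))]⟩
      · exact absurd (h1.trans h2.symm) hxy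
    obtain ⟨hv₁B, hv₂B, hcharB'⟩ := hkey
    have htBS : tB ⊆ S := fun z hz => by rcases hcharB' z hz with h|h|h <;> simp [hS, h]
    have hu₁f : ¬ (∃ t ∈ T, u₁ ∈ t ∧ t ⊆ S) := by
      rintro ⟨t, ht, hut, hts⟩
      obtain ⟨x', y', hxy', hx1, hy1, hxt, hyt, hchart, hax', hay', haxy'⟩ := shape t ht u₁ hut
      have hteq : ∀ w, w ∈ t → w ∈ tA → False := fun w hw hw' => by
        have heq : t = tA := uniq t ht tA htA w hw hw'
        rcases hchar u₁ (heq ▸ hut) with h|h|h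
        exacts [ne_u1_a1 h, ne_u1_a2 h, ne_u1_b2 h]
      rcases Nu₁ x' (hts hxt) hax' with h|h|h
      · rcases Nu₁ y' (hts hyt) hay' with h2|h2|h2
        · exact hxy' (h.trans h2.symm)
        · exact hteq y' hyt (by rw [h2]; exact ha₁A)
        · exact hteq y' hyt (by rw [h2]; exact ha₂A)
      · exact hteq x' hxt (by rw [h]; exact ha₁A)
      · exact hteq x' hxt (by rw [h]; exact ha₂A)
    have hu₂f : ¬ (∃ t ∈ T, u₂ ∈ t ∧ t ⊆ S) := by
      rintro ⟨t, ht, hut, hts⟩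
      obtain ⟨x', y', hxy', hx1, hy1, hxt, hyt, hchart, hax', hay', haxy'⟩ := shape t ht u₂ hut
      have hteq : ∀ w, w ∈ t → w ∈ tA → False := fun w hw hw' => by
        have heq : t = tA := uniq t ht tA htA w hw hw'
        rcases hchar u₂ (heq ▸ hut) with h|h|h
        exacts [ne_u2_a1 h, ne_u2_a2 h, ne_u2_b2 h]
      rcases Nu₂ x' (hts hxt) hax' with h|h
      · rcases Nu₂ y' (hts hyt) hay' with h2|h2
        · exact hxy' (h.trans h2.symm)
        · exact hteq y' hyt (by rw [h2]; exact ha₂A)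
      · exact hteq x' hxt (by rw [h]; exact ha₂A)
    exact ⟨iff_of_false hu₁f (not_not_intro ⟨tB, htB, hv₁B, htBS⟩),
      iff_of_false hu₂f (not_not_intro ⟨tB, htB, hv₂B, htBS⟩)⟩
  -- Case 3: tA = {a₁, b₁, b₂}
  have case3 : ∀ tA ∈ T, a₁ ∈ tA → b₁ ∈ tA → b₂ ∈ tA →
      (∀ z ∈ tA, z = a₁ ∨ z = b₁ ∨ z = b₂) →
      ((∃ t ∈ T, u₁ ∈ t ∧ t ⊆ S) ↔ ¬ (∃ t ∈ T, v₁ ∈ t ∧ t ⊆ S)) ∧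
      ((∃ t ∈ T, u₂ ∈ t ∧ t ⊆ S) ↔ ¬ (∃ t ∈ T, v₂ ∈ t ∧ t ⊆ S)) := by
    intro tA htA ha₁A hb₁A hb₂A hchar
    obtain ⟨tB, ⟨htB, ha₂B⟩, -⟩ := hTpart a₂
    obtain ⟨x, y, hxy, hxb, hyb, hxB, hyB, hcharB, hbx, hby, hbxy⟩ := shape tB htB a₂ ha₂B
    have hdisjA : ∀ w, w ∈ tB → w ∈ tA → False := fun w hw hw' => by
      have heq : tB = tA := uniq tB htB tA htA w hw hw'
      rcases hchar a₂ (heq ▸ ha₂B) with h|h|h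
      exacts [ne_a2_a1 h, ne_a2_b1 h, ne_a2_b2 h]
    have hx' : x = u₁ ∨ x = u₂ := by
      rcases Na₂ x hbx with h|h|h|h
      · exact absurd (hdisjA x hxB (by rw [h]; exact ha₁A)) not_false
      · exact Or.inr h
      · exact Or.inl h
      · exact absurd (hdisjA x hxB (by rw [h]; exact hb₂A)) not_false
    have hy' : y = u₁ ∨ y = u₂ := by
      rcases Na₂ y hby with h|h|h|h
      · exact absurd (hdisjA y hyB (by rw [h]; exact ha₁A)) not_false
      · exact Or.inr h
      · exact Or.inl h
      · exact absurd (hdisjA y hyB (by rw [h]; exact hb₂A)) not_false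
    have hkey : u₁ ∈ tB ∧ u₂ ∈ tB ∧ ∀ z ∈ tB, z = a₂ ∨ z = u₁ ∨ z = u₂ := by
      rcases hx' with h1|h1 <;> rcases hy' with h2|h2
      · exact absurd (h1.trans h2.symm) hxy
      · exact ⟨by rw [← h1]; exact hxB, by rw [← h2]; exact hyB, fun z hz => by
          rcases hcharB z hz with h|h|h
          exacts [Or.inl h, Or.inr (Or.inl (h.trans h1)), Or.inr (Or.inr (h.trans h2))]⟩
      · exact ⟨by rw [← h2]; exact hyB, by rw [← h1]; exact hxB, fun z hz => by
          rcases hcharB z hz with h|h|h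
          exacts [Or.inl h, Or.inr (Or.inr (h.trans h1)), Or.inr (Or.inl (h.trans h2))]⟩
      · exact absurd (h1.trans h2.symm) hxy
    obtain ⟨hu₁B, hu₂B, hcharB'⟩ := hkey
    have htBS : tB ⊆ S := fun z hz => by rcases hcharB' z hz with h|h|h <;> simp [hS, h]
    have hv₁f : ¬ (∃ t ∈ T, v₁ ∈ t ∧ t ⊆ S) := by
      rintro ⟨t, ht, hvt, hts⟩
      obtain ⟨x', y', hxy', hx1, hy1, hxt, hyt, hchart, hax', hay', haxy'⟩ := shape t ht v₁ hvt
      have hteq : ∀ w, w ∈ t → w ∈ tA → False := fun w hw hw' => by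
        have heq : t = tA := uniq t ht tA htA w hw hw'
        rcases hchar v₁ (heq ▸ hvt) with h|h|h
        exacts [ne_v1_a1 h, ne_v1_b1 h, ne_v1_b2 h]
      rcases Nv₁ x' (hts hxt) hax' with h|h
      · rcases Nv₁ y' (hts hyt) hay' with h2|h2
        · exact hxy' (h.trans h2.symm)
        · exact hteq y' hyt (by rw [h2]; exact hb₁A)
      · exact hteq x' hxt (by rw [h]; exact hb₁A)
    have hv₂f : ¬ (∃ t ∈ T, v₂ ∈ t ∧ t ⊆ S) := by
      rintro ⟨t, ht, hvt, hts⟩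
      obtain ⟨x', y', hxy', hx1, hy1, hxt, hyt, hchart, hax', hay', haxy'⟩ := shape t ht v₂ hvt
      have hteq : ∀ w, w ∈ t → w ∈ tA → False := fun w hw hw' => by
        have heq : t = tA := uniq t ht tA htA w hw hw'
        rcases hchar v₂ (heq ▸ hvt) with h|h|h
        exacts [ne_v2_a1 h, ne_v2_b1 h, ne_v2_b2 h]
      rcases Nv₂ x' (hts hxt) hax' with h|h|h
      · rcases Nv₂ y' (hts hyt) hay' with h2|h2|h2
        · exact hxy' (h.trans h2.symm)
        · exact hteq y' hyt (by rw [h2]; exact hb₂A)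
        · exact hteq y' hyt (by rw [h2]; exact hb₁A)
      · exact hteq x' hxt (by rw [h]; exact hb₂A)
      · exact hteq x' hxt (by rw [h]; exact hb₁A)
    exact ⟨iff_of_true ⟨tB, htB, hu₁B, htBS⟩ hv₁f,
      iff_of_true ⟨tB, htB, hu₂B, htBS⟩ hv₂f⟩
  -- main dispatch: the triangle containing a₁
  obtain ⟨tA, ⟨htA, ha₁A⟩, -⟩ := hTpart a₁
  obtain ⟨x, y, hxy, hxa, hya, hxA, hyA, hcharA, hax, hay, haxy⟩ := shape tA htA a₁ ha₁A
  have mkchar : ∀ p q : V, x = p → y = q → ∀ z ∈ tA, z = a₁ ∨ z = p ∨ z = q := by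
    intro p q hp hq z hz
    rcases hcharA z hz with h|h|h
    exacts [Or.inl h, Or.inr (Or.inl (h.trans hp)), Or.inr (Or.inr (h.trans hq))]
  rcases Na₁ x hax with h1|h1|h1|h1 <;> rcases Na₁ y hay with h2|h2|h2|h2
  -- x = u₁
  · exact absurd (h1.trans h2.symm) hxy
  · exact case1 tA htA ha₁A (by rw [← h1]; exact hxA) (by rw [← h2]; exact hyA)
      (mkchar u₁ a₂ h1 h2)
  · -- x = u₁, y = b₁ : not adjacent
    exact absurd (Nu₁ b₁ hb₁S (by rw [← h1, ← h2]; exact haxy)) (by rintro (h|h|h); exacts [ne_b1_u2 h, ne_b1_a1 h, ne_b1_a2 h])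
  · exact absurd (Nu₁ b₂ hb₂S (by rw [← h1, ← h2]; exact haxy)) (by rintro (h|h|h); exacts [ne_b2_u2 h, ne_b2_a1 h, ne_b2_a2 h])
  -- x = a₂
  · exact case1 tA htA ha₁A (by rw [← h2]; exact hyA) (by rw [← h1]; exact hxA)
      (fun z hz => by rcases mkchar a₂ u₁ h1 h2 z hz with h|h|h; exacts [Or.inl h, Or.inr (Or.inr h), Or.inr (Or.inl h)])
  · exact absurd (h1.trans h2.symm) hxy
  · exact absurd (Na₂ b₁ (by rw [← h1, ← h2]; exact haxy)) (by rintro (h|h|h|h); exacts [ne_b1_a1 h, ne_b1_u2 h, ne_b1_u1 h, ne_b1_b2 h])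
  · exact case2 tA htA ha₁A (by rw [← h1]; exact hxA) (by rw [← h2]; exact hyA)
      (mkchar a₂ b₂ h1 h2)
  -- x = b₁
  · exact absurd (Nb₁ u₁ (by rw [← h1, ← h2]; exact haxy)) (by rintro (h|h|h|h); exacts [ne_u1_b2 h, ne_u1_v1 h, ne_u1_a1 h, ne_u1_v2 h])
  · exact absurd (Nb₁ a₂ (by rw [← h1, ← h2]; exact haxy)) (by rintro (h|h|h|h); exacts [ne_a2_b2 h, ne_a2_v1 h, ne_a2_a1 h, ne_a2_v2 h])
  · exact absurd (h1.trans h2.symm) hxy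
  · exact case3 tA htA ha₁A (by rw [← h1]; exact hxA) (by rw [← h2]; exact hyA)
      (mkchar b₁ b₂ h1 h2)
  -- x = b₂
  · exact absurd (Nb₂ u₁ (by rw [← h1, ← h2]; exact haxy)) (by rintro (h|h|h|h); exacts [ne_u1_b1 h, ne_u1_a2 h, ne_u1_a1 h, ne_u1_v2 h])
  · exact case2 tA htA ha₁A (by rw [← h2]; exact hyA) (by rw [← h1]; exact hxA)
      (fun z hz => by rcases mkchar b₂ a₂ h1 h2 z hz with h|h|h; exacts [Or.inl h, Or.inr (Or.inr h), Or.inr (Or.inl h)])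
  · exact case3 tA htA ha₁A (by rw [← h2]; exact hyA) (by rw [← h1]; exact hxA)
      (fun z hz => by rcases mkchar b₂ b₁ h1 h2 z hz with h|h|h; exacts [Or.inl h, Or.inr (Or.inr h), Or.inr (Or.inl h)])
  · exact absurd (h1.trans h2.symm) hxy
end

section
/- Let t ≥ 1 and f : {1, …, t} → {1, 2}, and let Γ be the clause gadget determined by t and f. Then for every partition (V₀, V₁) of the vertex set of Γ, the crossing weight is at most 12t² + t + 1. Moreover, if the crossing weight equals 12t² + t + 1, then exactly one cycle edge is not crossing, this edge equals {c_{4(z*−1)+f(z*)}, c_{4(z*−1)+f(z*)+1}} for some z* ∈ {1, …, t}, and both of the two unit-weight edges incident with s_{z*} are crossing. -/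
open scoped Classical

/-- For the clause gadget determined by `t ≥ 1` and
`f : {1, …, t} → {1, 2}` (cycle `c₁, …, c_{4t+1}` with edges of weight `3t`, and,
for each `z`, the two unit-weight edges from `s_z` to `c_{4(z−1)+f(z)}` and
`c_{4(z−1)+f(z)+1}`), every partition `(V₀, V₁)` of the vertices has crossing
weight at most `12t² + t + 1`; in case of equality, exactly one cycle edge is not
crossing, it is the edge `{c_{4(z*−1)+f(z*)}, c_{4(z*−1)+f(z*)+1}}` for some
`z* ∈ {1, …, t}`, and both unit-weight edges at `s_{z*}` are crossing. -/
theorem clause_gadget_crossing_weight {V : Type*} (t : ℕ) (ht : 1 ≤ t)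
    (f : ℕ → ℕ) (hf : ∀ z, 1 ≤ z → z ≤ t → f z = 1 ∨ f z = 2)
    (c : ℕ → V) (s : ℕ → V)
    (hcinj : ∀ a b, 1 ≤ a → a ≤ 4 * t + 1 → 1 ≤ b → b ≤ 4 * t + 1 → c a = c b → a = b)
    (hsinj : ∀ a b, 1 ≤ a → a ≤ t → 1 ≤ b → b ≤ t → s a = s b → a = b)
    (hcs : ∀ a b, 1 ≤ a → a ≤ 4 * t + 1 → 1 ≤ b → b ≤ t → c a ≠ s b)
    (V₀ V₁ : Set V) (hdisj : Disjoint V₀ V₁) (hcover : V₀ ∪ V₁ = Set.univ)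
    (cross : V → V → Prop)
    (hcross : ∀ x y, cross x y ↔ ((x ∈ V₀ ∧ y ∈ V₁) ∨ (x ∈ V₁ ∧ y ∈ V₀)))
    (crossWeight : ℕ)
    (hw : crossWeight =
      (∑ z ∈ Finset.Icc 1 (4 * t), if cross (c z) (c (z + 1)) then 3 * t else 0) +
      (if cross (c (4 * t + 1)) (c 1) then 3 * t else 0) +
      ∑ z ∈ Finset.Icc 1 t,
        ((if cross (s z) (c (4 * (z - 1) + f z)) then 1 else 0) +
         (if cross (s z) (c (4 * (z - 1) + f z + 1)) then 1 else 0))) :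
    crossWeight ≤ 12 * t ^ 2 + t + 1 ∧
    (crossWeight = 12 * t ^ 2 + t + 1 →
      ∃ z', 1 ≤ z' ∧ z' ≤ t ∧
        (∀ z, 1 ≤ z → z ≤ 4 * t →
          (¬ cross (c z) (c (z + 1)) ↔ z = 4 * (z' - 1) + f z')) ∧
        cross (c (4 * t + 1)) (c 1) ∧
        cross (s z') (c (4 * (z' - 1) + f z')) ∧
        cross (s z') (c (4 * (z' - 1) + f z' + 1))) := by
  classical
  -- basic membership facts
  have hmem : ∀ v : V, v ∈ V₀ ↔ ¬ v ∈ V₁ := by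
    intro v
    constructor
    · intro h hv; exact Set.disjoint_left.mp hdisj h hv
    · intro h
      have hv : v ∈ V₀ ∪ V₁ := by rw [hcover]; trivial
      rcases hv with h0 | h1
      · exact h0
      · exact absurd h1 h
  have hcr : ∀ x y, cross x y ↔ ¬ ((x ∈ V₁) ↔ (y ∈ V₁)) := by
    intro x y
    rw [hcross, hmem x, hmem y]
    tauto
  have hsan : ∀ x y1 y2, cross x y1 → cross x y2 → ¬ cross y1 y2 := by
    intro x y1 y2 h1 h2
    rw [hcr] at h1 h2 ⊢
    tauto
  -- indicator counts
  set χ : ℕ → ℕ := fun z => if cross (c z) (c (z + 1)) then 1 else 0 with hχdef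
  set K : ℕ := ∑ z ∈ Finset.Icc 1 (4 * t), χ z with hKdef
  set wI : ℕ := if cross (c (4 * t + 1)) (c 1) then 1 else 0 with hwIdef
  set S : ℕ := ∑ z ∈ Finset.Icc 1 t,
        ((if cross (s z) (c (4 * (z - 1) + f z)) then 1 else 0) +
         (if cross (s z) (c (4 * (z - 1) + f z + 1)) then 1 else 0)) with hSdef
  clear_value S
  have hw' : crossWeight = 3 * t * K + 3 * t * wI + S := by
    rw [hw, hKdef, hwIdef, hSdef, Finset.mul_sum]
    congr 1
    congr 1
    · apply Finset.sum_congr rfl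
      intro z _
      rw [hχdef]
      by_cases h : cross (c z) (c (z + 1)) <;> simp [h]
    · by_cases h : cross (c (4 * t + 1)) (c 1) <;> simp [h]
  -- parity: K + wI is even
  have hpar : 2 ∣ (K + wI) := by
    set d : ℕ → ZMod 2 := fun z => if c z ∈ V₁ then 1 else 0 with hddef
    have hdd : ∀ x : ZMod 2, x + x = 0 := by decide
    have hχ2 : ∀ z, ((χ z : ℕ) : ZMod 2) = d z + d (z + 1) := by
      intro z
      by_cases h1 : c z ∈ V₁ <;> by_cases h2 : c (z + 1) ∈ V₁ <;>
        simp [hχdef, hddef, hcr (c z) (c (z + 1)), h1, h2] <;> decide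
    have tele : ∀ n : ℕ, ((∑ z ∈ Finset.Icc 1 n, χ z : ℕ) : ZMod 2) = d 1 + d (n + 1) := by
      intro n
      induction n with
      | zero => simpa using (hdd (d 1)).symm
      | succ n ih =>
        rw [Finset.sum_Icc_succ_top (by omega : 1 ≤ n + 1), Nat.cast_add, ih, hχ2]
        have : d 1 + d (n + 1) + (d (n + 1) + d (n + 1 + 1)) =
            d 1 + d (n + 1 + 1) + (d (n + 1) + d (n + 1)) := by ring
        rw [this, hdd, add_zero]
    have hwI2 : ((wI : ℕ) : ZMod 2) = d (4 * t + 1) + d 1 := by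
      by_cases h1 : c (4 * t + 1) ∈ V₁ <;> by_cases h2 : c 1 ∈ V₁ <;>
        simp [hwIdef, hddef, hcr (c (4 * t + 1)) (c 1), h1, h2] <;> decide
    have h0 : ((K + wI : ℕ) : ZMod 2) = 0 := by
      rw [Nat.cast_add, hKdef, tele (4 * t), hwI2]
      have : d 1 + d (4 * t + 1) + (d (4 * t + 1) + d 1) =
          (d 1 + d 1) + (d (4 * t + 1) + d (4 * t + 1)) := by ring
      rw [this, hdd, hdd, add_zero]
    exact (ZMod.natCast_eq_zero_iff _ 2).mp h0
  have hKle : K ≤ 4 * t := by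
    rw [hKdef]
    calc ∑ z ∈ Finset.Icc 1 (4 * t), χ z ≤ ∑ _z ∈ Finset.Icc 1 (4 * t), 1 := by
          apply Finset.sum_le_sum; intro z _; simp only [hχdef]; split <;> omega
      _ = 4 * t := by simp
  have hwle : wI ≤ 1 := by rw [hwIdef]; split <;> omega
  -- non-crossing cycle edges
  set NC : Finset ℕ := (Finset.Icc 1 (4 * t)).filter
      (fun z => ¬ cross (c z) (c (z + 1))) with hNCdef
  clear_value NC
  have hKNC : K + NC.card = 4 * t := by
    have h1 : K = ((Finset.Icc 1 (4 * t)).filter (fun z => cross (c z) (c (z + 1)))).card := by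
      rw [hKdef, Finset.card_filter]
    rw [h1, hNCdef, Finset.card_filter_add_card_filter_not]
    simp
  -- s-vertices with both edges crossing
  set B : Finset ℕ := (Finset.Icc 1 t).filter
      (fun z => cross (s z) (c (4 * (z - 1) + f z)) ∧
                 cross (s z) (c (4 * (z - 1) + f z + 1))) with hBdef
  clear_value B
  have hSB : S ≤ t + B.card := by
    have step : S ≤ ∑ z ∈ Finset.Icc 1 t,
        (1 + (if (cross (s z) (c (4 * (z - 1) + f z)) ∧
                  cross (s z) (c (4 * (z - 1) + f z + 1))) then 1 else 0)) := by
      rw [hSdef]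
      apply Finset.sum_le_sum
      intro z _
      by_cases h1 : cross (s z) (c (4 * (z - 1) + f z)) <;>
        by_cases h2 : cross (s z) (c (4 * (z - 1) + f z + 1)) <;>
        simp [h1, h2]
    have hsplit : ∑ z ∈ Finset.Icc 1 t,
        (1 + (if (cross (s z) (c (4 * (z - 1) + f z)) ∧
                  cross (s z) (c (4 * (z - 1) + f z + 1))) then 1 else 0)) = t + B.card := by
      rw [Finset.sum_add_distrib, Finset.sum_const, smul_eq_mul, mul_one, Nat.card_Icc,
        hBdef, Finset.card_filter]
      omega
    rw [hsplit] at step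
    exact step
  have hBNC : B.card ≤ NC.card := by
    apply Finset.card_le_card_of_injOn (fun z => 4 * (z - 1) + f z)
    · intro z hz
      simp only [hBdef, Finset.coe_filter, Finset.mem_coe, Set.mem_setOf_eq, Finset.mem_filter, Finset.mem_Icc] at hz
      obtain ⟨⟨hz1, hz2⟩, hb1, hb2⟩ := hz
      rw [Finset.mem_coe, hNCdef, Finset.mem_filter, Finset.mem_Icc]
      beta_reduce
      rcases hf z hz1 hz2 with h | h <;>
        exact ⟨⟨by omega, by omega⟩, hsan _ _ _ hb1 hb2⟩
    · intro z1 hz1 z2 hz2 heq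
      simp only [hBdef, Finset.coe_filter, Set.mem_setOf_eq, Finset.mem_Icc] at hz1 hz2
      obtain ⟨⟨ha1, ha2⟩, _⟩ := hz1
      obtain ⟨⟨hb1, hb2⟩, _⟩ := hz2
      have heq2 : 4 * (z1 - 1) + f z1 = 4 * (z2 - 1) + f z2 := heq
      rcases hf z1 ha1 ha2 with h1 | h1 <;> rcases hf z2 hb1 hb2 with h2 | h2 <;> omega
  have hS2t : S ≤ 2 * t := by
    rw [hSdef]
    calc _ ≤ ∑ _z ∈ Finset.Icc 1 t, 2 := by
          apply Finset.sum_le_sum; intro z _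
          by_cases h1 : cross (s z) (c (4 * (z - 1) + f z)) <;>
            by_cases h2 : cross (s z) (c (4 * (z - 1) + f z + 1)) <;> simp [h1, h2]
      _ = 2 * t := by simp [mul_comm]
  -- case analysis
  by_cases hcase : K + wI = 4 * t
  · by_cases hwrap : cross (c (4 * t + 1)) (c 1)
    · -- wI = 1, exactly one non-crossing cycle edge
      have hwI1 : wI = 1 := by rw [hwIdef]; simp [hwrap]
      have hNC1 : NC.card = 1 := by omega
      have hcw : crossWeight = 12 * t ^ 2 + S := by
        rw [hw']
        have : 3 * t * K + 3 * t * wI = 3 * t * (K + wI) := by ring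
        rw [this, hcase]
        ring_nf
      have hSle : S ≤ t + 1 := by omega
      constructor
      · rw [hcw]; linarith
      · intro heq
        have hSeq : S = t + 1 := by
          rw [hcw] at heq; linarith
        have hB1 : 1 ≤ B.card := by omega
        obtain ⟨z', hz'⟩ := Finset.card_pos.mp (show 0 < B.card by omega)
        have hz'mem := hz'
        rw [hBdef, Finset.mem_filter, Finset.mem_Icc] at hz'mem
        obtain ⟨⟨hz1, hz2⟩, hb1, hb2⟩ := hz'mem
        have haNC : 4 * (z' - 1) + f z' ∈ NC := by
          rw [hNCdef, Finset.mem_filter, Finset.mem_Icc]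
          rcases hf z' hz1 hz2 with h | h <;>
            exact ⟨⟨by omega, by omega⟩, hsan _ _ _ hb1 hb2⟩
        obtain ⟨x, hx⟩ := Finset.card_eq_one.mp hNC1
        have hxeq : x = 4 * (z' - 1) + f z' := by
          rw [hx, Finset.mem_singleton] at haNC; exact haNC.symm
        refine ⟨z', hz1, hz2, ?_, hwrap, hb1, hb2⟩
        intro z hzl hzr
        constructor
        · intro hnc
          have : z ∈ NC := by
            rw [hNCdef, Finset.mem_filter, Finset.mem_Icc]; exact ⟨⟨hzl, hzr⟩, hnc⟩
          rw [hx, Finset.mem_singleton, hxeq] at this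
          exact this
        · intro hz
          subst hz
          rw [hNCdef, Finset.mem_filter] at haNC
          exact haNC.2
    · -- wI = 0, all cycle edges in the path crossing
      have hwI0 : wI = 0 := by rw [hwIdef]; simp [hwrap]
      have hNC0 : NC.card = 0 := by omega
      have hSle : S ≤ t := by omega
      have hcw : crossWeight = 12 * t ^ 2 + S := by
        rw [hw', hwI0]
        have hK4 : K = 4 * t := by omega
        rw [hK4]; ring_nf
      constructor
      · rw [hcw]; linarith
      · intro heq; exfalso; rw [hcw] at heq; linarith
  · -- K + wI ≤ 4t - 2
    have hle : K + wI + 2 ≤ 4 * t := by omega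
    have hmul : 3 * t * (K + wI + 2) ≤ 3 * t * (4 * t) :=
      Nat.mul_le_mul_left _ hle
    have hmul' : 3 * t * K + 3 * t * wI + 6 * t ≤ 12 * t ^ 2 := by
      have e1 : 3 * t * (K + wI + 2) = 3 * t * K + 3 * t * wI + 6 * t := by ring
      have e2 : 3 * t * (4 * t) = 12 * t ^ 2 := by ring
      rw [e1, e2] at hmul
      exact hmul
    have hcwle : crossWeight + 4 * t ≤ 12 * t ^ 2 := by
      rw [hw']
      linarith
    constructor
    · linarith
    · intro heq
      exfalso
      linarith
end
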